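/- arXiv:2506.04197 — 6 statements merged into one kernel-verified Lean document; each statement's English description precedes it below -/
import Mathlib

section
/- Let S ⊆ M_d be a finite set, let Φ : M_d → M_d be a unital completely positive map, and let E : M_d → M_d be a Hermitian-preserving linear map (E(x)* = E(x*) for all x) such that Φ ∘ E = E. Then Cost_S(Φ) ≤ Cost_S(E) · ‖Φ − id‖_{sa}, where ‖Φ − id‖_{sa} := sup{ ‖Φ(y) − y‖ : y = y* ∈ M_d, ‖y‖ ≤ 1 } and the inequality is in [0,∞]. -/
/-!
Write `y := E x - x`, a Hermitian matrix. Since `Φ` fixes `E x`, linearity gives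
`Φ x - x = -(Φ y - y)`, and homogeneity bounds `‖Φ y - y‖` by `‖y‖ · ‖Φ - id‖_{sa}`.
Finally `‖y‖ = ‖E x - x‖ ≤ Cost_S(E)` whenever `|||x|||_S ≤ 1`.
-/

open scoped ENNReal NNReal ComplexOrder Matrix Matrix.Norms.L2Operator Kronecker

noncomputable section

/-- The amplification `id_{M_n} ⊗ Φ` of a map on matrices, acting blockwise. -/
def ampFun {ι : Type*} (Φ : Matrix ι ι ℂ → Matrix ι ι ℂ) (n : ℕ)
    (X : Matrix (Fin n × ι) (Fin n × ι) ℂ) : Matrix (Fin n × ι) (Fin n × ι) ℂ :=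
  Matrix.of fun p q => Φ (Matrix.of fun k l => X (p.1, k) (q.1, l)) p.2 q.2

/-- A unital completely positive map on `Matrix ι ι ℂ`: a linear map sending `1` to `1`
all of whose amplifications preserve positive semidefiniteness. -/
structure IsUCP {ι : Type*} [Fintype ι] [DecidableEq ι]
    (Φ : Matrix ι ι ℂ → Matrix ι ι ℂ) : Prop where
  map_add : ∀ x y, Φ (x + y) = Φ x + Φ y
  map_smul : ∀ (c : ℂ) (x), Φ (c • x) = c • Φ x
  unital : Φ 1 = 1
  cp : ∀ (n : ℕ) (X : Matrix (Fin n × ι) (Fin n × ι) ℂ),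
    X.PosSemidef → (ampFun Φ n X).PosSemidef

/-- Transportation cost of a map `Φ` w.r.t. a seminorm `L`, valued in `[0,∞]`. -/
def Cost {ι : Type*} [Fintype ι] [DecidableEq ι] (L : Matrix ι ι ℂ → ℝ)
    (Φ : Matrix ι ι ℂ → Matrix ι ι ℂ) : ℝ≥0∞ :=
  ⨆ x ∈ {x : Matrix ι ι ℂ | x.IsHermitian ∧ L x ≤ 1}, ENNReal.ofReal ‖Φ x - x‖

/-- Lipschitz constant of a map `Φ` w.r.t. a seminorm `L`, valued in `[0,∞]`. -/
def Lip {ι : Type*} [Fintype ι] [DecidableEq ι] (L : Matrix ι ι ℂ → ℝ)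
    (Φ : Matrix ι ι ℂ → Matrix ι ι ℂ) : ℝ≥0∞ :=
  ⨆ x ∈ {x : Matrix ι ι ℂ | x.IsHermitian ∧ L x ≤ 1}, ENNReal.ofReal (L (Φ x))

/-- Commutator seminorm `|||x|||_S = max_{s ∈ S} ‖s*x - x*s‖` (operator norm). -/
def cnorm {ι : Type*} [Fintype ι] [DecidableEq ι] (S : Finset (Matrix ι ι ℂ))
    (x : Matrix ι ι ℂ) : ℝ :=
  ((S.sup fun s => ‖s * x - x * s‖₊ : ℝ≥0) : ℝ)

/-- Amplified commutator seminorm `|||X|||_{S,n} = max_{s∈S} ‖(1ₙ⊗s)X - X(1ₙ⊗s)‖` on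
`M_n ⊗ M_ι`. -/
def cnormAmp {ι : Type*} [Fintype ι] [DecidableEq ι] (S : Finset (Matrix ι ι ℂ)) (n : ℕ)
    (X : Matrix (Fin n × ι) (Fin n × ι) ℂ) : ℝ :=
  ((S.sup fun s => ‖((1 : Matrix (Fin n) (Fin n) ℂ) ⊗ₖ s) * X
      - X * ((1 : Matrix (Fin n) (Fin n) ℂ) ⊗ₖ s)‖₊ : ℝ≥0) : ℝ)

/-- Complete transportation cost w.r.t. the commutator seminorms of `S`. -/
def Costcb {ι : Type*} [Fintype ι] [DecidableEq ι] (S : Finset (Matrix ι ι ℂ))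
    (Φ : Matrix ι ι ℂ → Matrix ι ι ℂ) : ℝ≥0∞ :=
  ⨆ (n : ℕ), ⨆ X ∈ {X : Matrix (Fin n × ι) (Fin n × ι) ℂ |
      X.IsHermitian ∧ cnormAmp S n X ≤ 1}, ENNReal.ofReal ‖ampFun Φ n X - X‖

/-- Complete Lipschitz constant w.r.t. the commutator seminorms of `S`. -/
def Lipcb {ι : Type*} [Fintype ι] [DecidableEq ι] (S : Finset (Matrix ι ι ℂ))
    (Φ : Matrix ι ι ℂ → Matrix ι ι ℂ) : ℝ≥0∞ :=
  ⨆ (n : ℕ), ⨆ X ∈ {X : Matrix (Fin n × ι) (Fin n × ι) ℂ |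
      X.IsHermitian ∧ cnormAmp S n X ≤ 1}, ENNReal.ofReal (cnormAmp S n (ampFun Φ n X))

/-- The norm `‖Θ - id‖_{sa} = sup { ‖Θ y - y‖ : y = y*, ‖y‖ ≤ 1 }`, valued in `[0,∞]`. -/
def saDistId {ι : Type*} [Fintype ι] [DecidableEq ι]
    (Θ : Matrix ι ι ℂ → Matrix ι ι ℂ) : ℝ≥0∞ :=
  ⨆ y ∈ {y : Matrix ι ι ℂ | y.IsHermitian ∧ ‖y‖ ≤ 1}, ENNReal.ofReal ‖Θ y - y‖

section

variable {ι : Type*} [Fintype ι] [DecidableEq ι]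

theorem IsUCP.map_sub {Φ : Matrix ι ι ℂ → Matrix ι ι ℂ} (hΦ : IsUCP Φ) (x y : Matrix ι ι ℂ) :
    Φ (x - y) = Φ x - Φ y :=
  (AddMonoidHom.mk' Φ hΦ.map_add).map_sub x y

theorem ofReal_norm_sub_le_cost (L : Matrix ι ι ℂ → ℝ) (Θ : Matrix ι ι ℂ → Matrix ι ι ℂ)
    {x : Matrix ι ι ℂ} (hx : x.IsHermitian) (hLx : L x ≤ 1) :
    ENNReal.ofReal ‖Θ x - x‖ ≤ Cost L Θ :=
  le_iSup₂ (f := fun x (_ : x ∈ {x : Matrix ι ι ℂ | x.IsHermitian ∧ L x ≤ 1}) =>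
    ENNReal.ofReal ‖Θ x - x‖) x ⟨hx, hLx⟩

theorem ofReal_norm_sub_le_saDistId (Θ : Matrix ι ι ℂ → Matrix ι ι ℂ) {y : Matrix ι ι ℂ}
    (hy : y.IsHermitian) (hy_norm : ‖y‖ ≤ 1) :
    ENNReal.ofReal ‖Θ y - y‖ ≤ saDistId Θ :=
  le_iSup₂ (f := fun y (_ : y ∈ {y : Matrix ι ι ℂ | y.IsHermitian ∧ ‖y‖ ≤ 1}) =>
    ENNReal.ofReal ‖Θ y - y‖) y ⟨hy, hy_norm⟩

theorem ofReal_norm_sub_le_mul_saDistId {Θ : Matrix ι ι ℂ → Matrix ι ι ℂ}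
    (hΘ : ∀ (c : ℂ) x, Θ (c • x) = c • Θ x) {y : Matrix ι ι ℂ} (hy : y.IsHermitian) :
    ENNReal.ofReal ‖Θ y - y‖ ≤ ENNReal.ofReal ‖y‖ * saDistId Θ := by
  rcases eq_or_ne y 0 with rfl | hy0
  · simpa using hΘ 0 0
  have hpos : 0 < ‖y‖ := norm_pos_iff.mpr hy0
  set z : Matrix ι ι ℂ := ((‖y‖⁻¹ : ℝ) : ℂ) • y
  have hz : z.IsHermitian := hy.smul (Complex.conj_ofReal _)
  have hz_norm : ‖z‖ = 1 := by
    rw [norm_smul, Complex.norm_real, Real.norm_of_nonneg (inv_nonneg.mpr hpos.le),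
      inv_mul_cancel₀ hpos.ne']
  have hyz : y = ((‖y‖ : ℝ) : ℂ) • z := by
    rw [smul_smul, ← Complex.ofReal_mul, mul_inv_cancel₀ hpos.ne', Complex.ofReal_one, one_smul]
  have hscale : ‖Θ y - y‖ = ‖y‖ * ‖Θ z - z‖ := by
    conv_lhs => rw [hyz, hΘ, ← smul_sub, norm_smul, Complex.norm_real, norm_norm]
  rw [hscale, ENNReal.ofReal_mul hpos.le]
  gcongr
  exact ofReal_norm_sub_le_saDistId Θ hz hz_norm.le

end

theorem cost_le_cost_conditional_expectation_mul_general {d : ℕ}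
    (S : Finset (Matrix (Fin d) (Fin d) ℂ))
    (Φ E : Matrix (Fin d) (Fin d) ℂ → Matrix (Fin d) (Fin d) ℂ)
    (hΦ : IsUCP Φ)
    (hE_herm : ∀ x, (E x)ᴴ = E xᴴ)
    (hΦE : ∀ x, Φ (E x) = E x) :
    Cost (cnorm S) Φ ≤ Cost (cnorm S) E * saDistId Φ := by
  refine iSup₂_le fun x hx => ?_
  have hy : (E x - x).IsHermitian := by
    rw [Matrix.IsHermitian, Matrix.conjTranspose_sub, hE_herm, hx.1.eq]
  have hreduce : Φ x - x = -(Φ (E x - x) - (E x - x)) := by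
    rw [hΦ.map_sub, hΦE]
    abel
  calc ENNReal.ofReal ‖Φ x - x‖ = ENNReal.ofReal ‖Φ (E x - x) - (E x - x)‖ := by
        rw [hreduce, norm_neg]
    _ ≤ ENNReal.ofReal ‖E x - x‖ * saDistId Φ :=
        ofReal_norm_sub_le_mul_saDistId hΦ.map_smul hy
    _ ≤ Cost (cnorm S) E * saDistId Φ := by
        gcongr
        exact ofReal_norm_sub_le_cost (cnorm S) E hx.1 hx.2

/-- Universal upper bound: if `Φ` is UCP, `E` is Hermitian-preserving and
`Φ ∘ E = E`, then `Cost_S(Φ) ≤ Cost_S(E) · ‖Φ - id‖_{sa}`. -/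
theorem cost_le_cost_conditional_expectation_mul {d : ℕ}
    (S : Finset (Matrix (Fin d) (Fin d) ℂ))
    (Φ E : Matrix (Fin d) (Fin d) ℂ → Matrix (Fin d) (Fin d) ℂ)
    (hΦ : IsUCP Φ)
    (hE_lin : ∀ (c : ℂ) (x y), E (c • x + y) = c • E x + E y)
    (hE_herm : ∀ x, (E x)ᴴ = E xᴴ)
    (hΦE : ∀ x, Φ (E x) = E x) :
    Cost (cnorm S) Φ ≤ Cost (cnorm S) E * saDistId Φ :=
  cost_le_cost_conditional_expectation_mul_general S Φ E hΦ hE_herm hΦE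

end
end

section
/- Let S ⊆ M_d be a finite set, let Φ₁, Φ₂ : M_d → M_d be unital completely positive maps, and let E : M_d → M_d be a Hermitian-preserving linear map whose range commutes with every element of S, satisfying Φ₁ ∘ E = Φ₂ ∘ E = E. Assume κ(S) := Cost^{cb}_S(E) < ∞. Then (continuity of cost and Lipschitz constant in the diamond/cb norm): |Cost^{cb}_S(Φ₂) − Cost^{cb}_S(Φ₁)| ≤ κ(S) · ‖Φ₁ − Φ₂‖_{cb} and |Lip^{cb}_S(Φ₂) − Lip^{cb}_S(Φ₁)| ≤ 2 · (max_{s∈S} ‖s‖) · κ(S) · ‖Φ₁ − Φ₂‖_{cb}, where ‖Θ‖_{cb} := sup_{n≥1} sup{ ‖(id_{M_n} ⊗ Θ)(X)‖ : X ∈ M_n ⊗ M_d, ‖X‖ ≤ 1 }. (All the quantities appearing on the left-hand sides are finite under these hypotheses.) -/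
open scoped ENNReal NNReal ComplexOrder Matrix Matrix.Norms.L2Operator Kronecker

noncomputable section

/-- The completely bounded norm `‖Θ‖_{cb} = sup_n sup { ‖(id_{M_n} ⊗ Θ)(X)‖ : ‖X‖ ≤ 1 }`,
valued in `[0,∞]`. -/
def cbNorm {ι : Type*} [Fintype ι] [DecidableEq ι]
    (Θ : Matrix ι ι ℂ → Matrix ι ι ℂ) : ℝ≥0∞ :=
  ⨆ (n : ℕ), ⨆ X ∈ {X : Matrix (Fin n × ι) (Fin n × ι) ℂ | ‖X‖ ≤ 1},
    ENNReal.ofReal ‖ampFun Θ n X‖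

/-!
Write `Θ = Φ₁ - Φ₂`. Both maps fix the range of `E`, so the amplification `Θₙ` kills `Eₙ X` and
`‖Θₙ X‖ = ‖Θₙ (X - Eₙ X)‖ ≤ ‖Θ‖_cb · ‖X - Eₙ X‖ ≤ ‖Θ‖_cb · κ(S)` for every admissible `X`. The
cost estimates are then the triangle inequality, and the Lipschitz estimates follow in the same
way from `|||Y|||_{S,n} ≤ 2 (max_{s∈S} ‖s‖) ‖Y‖`, which holds because `s ↦ 1ₙ ⊗ s` is a
`⋆`-homomorphism of C⋆-algebras and hence contractive.

For finiteness, a unital positive map is contractive on self-adjoint elements (it preserves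
`-‖a‖ ≤ a ≤ ‖a‖`), so for a UCP map `Ψ` fixing the range of `E` the decomposition
`Ψₙ X - X = Ψₙ (X - Eₙ X) + (Eₙ X - X)` gives `Cost^{cb}_S(Ψ) ≤ 2 κ(S)`.
-/

section CStarAlgebra

lemma PositiveLinearMap.map_algebraMap_of_map_one {A B : Type*} [CStarAlgebra A] [PartialOrder A]
    [CStarAlgebra B] [PartialOrder B] (f : A →ₚ[ℂ] B) (hf : f 1 = 1) (r : ℝ) :
    f (algebraMap ℝ A r) = algebraMap ℝ B r := by
  rw [Algebra.algebraMap_eq_smul_one, Algebra.algebraMap_eq_smul_one,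
    PositiveLinearMap.map_smul_of_tower, hf]

variable {A B : Type*} [CStarAlgebra A] [PartialOrder A] [StarOrderedRing A]
  [CStarAlgebra B] [PartialOrder B] [StarOrderedRing B]

lemma IsSelfAdjoint.norm_le_of_neg_le_of_le {a : A} (ha : IsSelfAdjoint a) {r : ℝ} (hr : 0 ≤ r)
    (h₁ : -algebraMap ℝ A r ≤ a) (h₂ : a ≤ algebraMap ℝ A r) : ‖a‖ ≤ r := by
  rcases subsingleton_or_nontrivial A with _ | _
  · simpa [Subsingleton.elim a 0] using hr
  rw [← map_neg, algebraMap_le_iff_le_spectrum ha] at h₁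
  rw [le_algebraMap_iff_spectrum_le ha] at h₂
  rcases CStarAlgebra.norm_or_neg_norm_mem_spectrum ha with h | h
  · exact h₂ _ h
  · linarith [h₁ _ h]

lemma PositiveLinearMap.norm_apply_le_of_isSelfAdjoint (f : A →ₚ[ℂ] B) (hf : f 1 = 1) {a : A}
    (ha : IsSelfAdjoint a) : ‖f a‖ ≤ ‖a‖ := by
  have hbound := f.map_algebraMap_of_map_one hf ‖a‖
  have hshift : 0 ≤ f (a + algebraMap ℝ A ‖a‖) :=
    f.map_nonneg (neg_le_iff_add_nonneg.mp ha.neg_algebraMap_norm_le_self)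
  rw [map_add, hbound] at hshift
  have hfa : IsSelfAdjoint (f a) := by
    simpa using (IsSelfAdjoint.of_nonneg hshift).sub (.algebraMap B (.all (‖a‖ : ℝ)))
  refine hfa.norm_le_of_neg_le_of_le (norm_nonneg a) ?_ ?_
  · simpa [hbound] using f.monotone' ha.neg_algebraMap_norm_le_self
  · simpa [hbound] using f.monotone' ha.le_algebraMap_norm_self

end CStarAlgebra

open scoped MatrixOrder

section Kronecker

variable {m ι : Type*} [Fintype m] [DecidableEq m] [Fintype ι] [DecidableEq ι]

def Matrix.oneKroneckerStarAlgHom : Matrix ι ι ℂ →⋆ₐ[ℂ] Matrix (m × ι) (m × ι) ℂ where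
  toFun s := (1 : Matrix m m ℂ) ⊗ₖ s
  map_one' := Matrix.one_kronecker_one
  map_mul' a b := by rw [← Matrix.mul_kronecker_mul, one_mul]
  map_zero' := Matrix.kronecker_zero _
  map_add' := Matrix.kronecker_add _
  commutes' r := by
    simp only [Algebra.algebraMap_eq_smul_one, Matrix.kronecker_smul, Matrix.one_kronecker_one]
  map_star' s := by
    simp only [Matrix.star_eq_conjTranspose, Matrix.conjTranspose_kronecker,
      Matrix.conjTranspose_one]

lemma Matrix.norm_one_kronecker_le (s : Matrix ι ι ℂ) : ‖(1 : Matrix m m ℂ) ⊗ₖ s‖ ≤ ‖s‖ :=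
  NonUnitalStarAlgHom.norm_apply_le (Matrix.oneKroneckerStarAlgHom (m := m)) s

end Kronecker

lemma norm_mul_sub_mul_le {A : Type*} [NormedRing A] (a x : A) :
    ‖a * x - x * a‖ ≤ 2 * ‖a‖ * ‖x‖ := by
  calc ‖a * x - x * a‖ ≤ ‖a‖ * ‖x‖ + ‖x‖ * ‖a‖ :=
        (norm_sub_le _ _).trans (add_le_add (norm_mul_le _ _) (norm_mul_le _ _))
    _ = 2 * ‖a‖ * ‖x‖ := by ring

section Amplification

variable {ι : Type*} {n : ℕ}

def ampLinearMap (Φ : Matrix ι ι ℂ →ₗ[ℂ] Matrix ι ι ℂ) (n : ℕ) :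
    Matrix (Fin n × ι) (Fin n × ι) ℂ →ₗ[ℂ] Matrix (Fin n × ι) (Fin n × ι) ℂ where
  toFun := ampFun Φ n
  map_add' X Y := by
    ext p q
    exact congrFun₂ (map_add Φ (.of fun k l => X (p.1, k) (q.1, l))
      (.of fun k l => Y (p.1, k) (q.1, l))) p.2 q.2
  map_smul' c X := by
    ext p q
    exact congrFun₂ (map_smul Φ c (.of fun k l => X (p.1, k) (q.1, l))) p.2 q.2

@[simp]
lemma coe_ampLinearMap (Φ : Matrix ι ι ℂ →ₗ[ℂ] Matrix ι ι ℂ) :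
    ⇑(ampLinearMap Φ n) = ampFun Φ n := rfl

lemma ampFun_ampFun (Φ Ψ : Matrix ι ι ℂ → Matrix ι ι ℂ) (X : Matrix (Fin n × ι) (Fin n × ι) ℂ) :
    ampFun Φ n (ampFun Ψ n X) = ampFun (Φ ∘ Ψ) n X := rfl

lemma ampFun_conjTranspose {Φ : Matrix ι ι ℂ → Matrix ι ι ℂ} (hΦ : ∀ x, (Φ x)ᴴ = Φ xᴴ)
    (X : Matrix (Fin n × ι) (Fin n × ι) ℂ) : (ampFun Φ n X)ᴴ = ampFun Φ n Xᴴ := by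
  ext p q
  exact congrFun₂ (hΦ (.of fun k l => X (q.1, k) (p.1, l))) p.2 q.2

lemma ampFun_sub_ampFun_of_fixes {Ψ : Matrix ι ι ℂ →ₗ[ℂ] Matrix ι ι ℂ}
    {E : Matrix ι ι ℂ → Matrix ι ι ℂ} (hΨE : ∀ x, Ψ (E x) = E x)
    (X : Matrix (Fin n × ι) (Fin n × ι) ℂ) :
    ampFun Ψ n (X - ampFun E n X) = ampFun Ψ n X - ampFun E n X := by
  rw [← coe_ampLinearMap, map_sub, coe_ampLinearMap, ampFun_ampFun,
    show ⇑Ψ ∘ E = E from funext hΨE]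

variable [DecidableEq ι]

lemma ampFun_one {Φ : Matrix ι ι ℂ →ₗ[ℂ] Matrix ι ι ℂ} (hΦ : Φ 1 = 1) :
    ampFun Φ n 1 = 1 := by
  ext ⟨a, i⟩ ⟨b, j⟩
  have hblock : (Matrix.of fun k l => (1 : Matrix (Fin n × ι) (Fin n × ι) ℂ) (a, k) (b, l))
      = if a = b then 1 else 0 := by
    split_ifs with h <;> ext k l <;> simp [Matrix.one_apply, h]
  change Φ _ i j = _
  rw [hblock]
  split_ifs with h <;> simp [hΦ, Matrix.one_apply, h]

end Amplification

namespace IsUCP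

variable {ι : Type*} [Fintype ι] [DecidableEq ι] {Φ : Matrix ι ι ℂ → Matrix ι ι ℂ} {n : ℕ}

def toLinearMap (hΦ : IsUCP Φ) : Matrix ι ι ℂ →ₗ[ℂ] Matrix ι ι ℂ where
  toFun := Φ
  map_add' := hΦ.map_add
  map_smul' := hΦ.map_smul

@[simp]
lemma coe_toLinearMap (hΦ : IsUCP Φ) : ⇑hΦ.toLinearMap = Φ := rfl

def ampPositiveMap (hΦ : IsUCP Φ) (n : ℕ) :
    Matrix (Fin n × ι) (Fin n × ι) ℂ →ₚ[ℂ] Matrix (Fin n × ι) (Fin n × ι) ℂ :=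
  .mk₀ (ampLinearMap hΦ.toLinearMap n) fun X hX =>
    (hΦ.cp n X (Matrix.nonneg_iff_posSemidef.mp hX)).nonneg

lemma norm_ampFun_le (hΦ : IsUCP Φ) {X : Matrix (Fin n × ι) (Fin n × ι) ℂ}
    (hX : X.IsHermitian) : ‖ampFun Φ n X‖ ≤ ‖X‖ :=
  (hΦ.ampPositiveMap n).norm_apply_le_of_isSelfAdjoint
    (ampFun_one (Φ := hΦ.toLinearMap) hΦ.unital) hX.isSelfAdjoint

end IsUCP

section CommutatorSeminorm

variable {ι : Type*} [Fintype ι] [DecidableEq ι] {S : Finset (Matrix ι ι ℂ)} {n : ℕ}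

lemma cnormAmp_add_le (X Y : Matrix (Fin n × ι) (Fin n × ι) ℂ) :
    cnormAmp S n (X + Y) ≤ cnormAmp S n X + cnormAmp S n Y := by
  rw [cnormAmp, cnormAmp, cnormAmp, ← NNReal.coe_add, NNReal.coe_le_coe]
  refine Finset.sup_le fun s hs => ?_
  rw [mul_add, add_mul, add_sub_add_comm]
  exact (nnnorm_add_le _ _).trans <| add_le_add
    (Finset.le_sup (f := fun s => ‖(1 ⊗ₖ s) * X - X * (1 ⊗ₖ s)‖₊) hs)
    (Finset.le_sup (f := fun s => ‖(1 ⊗ₖ s) * Y - Y * (1 ⊗ₖ s)‖₊) hs)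

lemma cnormAmp_le_two_mul_norm (X : Matrix (Fin n × ι) (Fin n × ι) ℂ) :
    cnormAmp S n X ≤ 2 * (S.sup fun s => ‖s‖₊ : ℝ≥0) * ‖X‖ := by
  rw [cnormAmp, ← coe_nnnorm, ← NNReal.coe_two, ← NNReal.coe_mul, ← NNReal.coe_mul,
    NNReal.coe_le_coe]
  refine Finset.sup_le fun s hs => ?_
  have hs : ‖(1 : Matrix (Fin n) (Fin n) ℂ) ⊗ₖ s‖₊ ≤ S.sup fun s => ‖s‖₊ :=
    (Matrix.norm_one_kronecker_le s).trans (Finset.le_sup (f := fun s => ‖s‖₊) hs)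
  calc ‖(1 ⊗ₖ s) * X - X * (1 ⊗ₖ s)‖₊ ≤ 2 * ‖(1 : Matrix (Fin n) (Fin n) ℂ) ⊗ₖ s‖₊ * ‖X‖₊ :=
        norm_mul_sub_mul_le _ _
    _ ≤ 2 * (S.sup fun s => ‖s‖₊) * ‖X‖₊ := by gcongr

lemma ofReal_cnormAmp_add_le (X Y : Matrix (Fin n × ι) (Fin n × ι) ℂ) :
    ENNReal.ofReal (cnormAmp S n (X + Y)) ≤ ENNReal.ofReal (cnormAmp S n X) +
      2 * ((S.sup fun s => ‖s‖₊ : ℝ≥0) : ℝ≥0∞) * ENNReal.ofReal ‖Y‖ := by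
  calc ENNReal.ofReal (cnormAmp S n (X + Y))
      ≤ ENNReal.ofReal (cnormAmp S n X + 2 * (S.sup fun s => ‖s‖₊ : ℝ≥0) * ‖Y‖) :=
        ENNReal.ofReal_le_ofReal <| (cnormAmp_add_le X Y).trans <| by
          gcongr; exact cnormAmp_le_two_mul_norm Y
    _ ≤ _ := by
        refine ENNReal.ofReal_add_le.trans_eq ?_
        rw [ENNReal.ofReal_mul (by positivity), ENNReal.ofReal_mul (by positivity)]
        simp

end CommutatorSeminorm

section Suprema

variable {ι : Type*} [Fintype ι] [DecidableEq ι] {S : Finset (Matrix ι ι ℂ)}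
  {Φ Ψ : Matrix ι ι ℂ → Matrix ι ι ℂ} {n : ℕ} {X : Matrix (Fin n × ι) (Fin n × ι) ℂ}

lemma le_Costcb (hX : X.IsHermitian) (hXS : cnormAmp S n X ≤ 1) :
    ENNReal.ofReal ‖ampFun Φ n X - X‖ ≤ Costcb S Φ :=
  le_iSup_of_le n (le_iSup₂_of_le X ⟨hX, hXS⟩ le_rfl)

lemma Costcb_le {C : ℝ≥0∞} (h : ∀ (n : ℕ) (X : Matrix (Fin n × ι) (Fin n × ι) ℂ),
    X.IsHermitian → cnormAmp S n X ≤ 1 → ENNReal.ofReal ‖ampFun Φ n X - X‖ ≤ C) :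
    Costcb S Φ ≤ C :=
  iSup_le fun n => iSup₂_le fun X hX => h n X hX.1 hX.2

lemma le_Lipcb (hX : X.IsHermitian) (hXS : cnormAmp S n X ≤ 1) :
    ENNReal.ofReal (cnormAmp S n (ampFun Φ n X)) ≤ Lipcb S Φ :=
  le_iSup_of_le n (le_iSup₂_of_le X ⟨hX, hXS⟩ le_rfl)

lemma Lipcb_le {C : ℝ≥0∞} (h : ∀ (n : ℕ) (X : Matrix (Fin n × ι) (Fin n × ι) ℂ),
    X.IsHermitian → cnormAmp S n X ≤ 1 → ENNReal.ofReal (cnormAmp S n (ampFun Φ n X)) ≤ C) :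
    Lipcb S Φ ≤ C :=
  iSup_le fun n => iSup₂_le fun X hX => h n X hX.1 hX.2

lemma le_cbNorm (hX : ‖X‖ ≤ 1) : ENNReal.ofReal ‖ampFun Φ n X‖ ≤ cbNorm Φ :=
  le_iSup_of_le n (le_iSup₂_of_le X hX le_rfl)

lemma ofReal_norm_ampFun_le_cbNorm_mul (Θ : Matrix ι ι ℂ →ₗ[ℂ] Matrix ι ι ℂ)
    (X : Matrix (Fin n × ι) (Fin n × ι) ℂ) :
    ENNReal.ofReal ‖ampFun Θ n X‖ ≤ cbNorm Θ * ENNReal.ofReal ‖X‖ := by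
  rcases eq_or_ne X 0 with rfl | hX
  · simp [← coe_ampLinearMap]
  have hX' : 0 < ‖X‖ := norm_pos_iff.mpr hX
  have hunit : ‖(‖X‖⁻¹ : ℂ) • X‖ ≤ 1 := by
    rw [norm_smul, norm_inv, Complex.norm_real, Real.norm_of_nonneg hX'.le,
      inv_mul_cancel₀ hX'.ne']
  have hscale : ‖ampFun Θ n X‖ = ‖ampFun Θ n ((‖X‖⁻¹ : ℂ) • X)‖ * ‖X‖ := by
    rw [← coe_ampLinearMap, map_smul, norm_smul, norm_inv, Complex.norm_real,
      Real.norm_of_nonneg hX'.le, mul_comm, ← mul_assoc, mul_inv_cancel₀ hX'.ne', one_mul]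
  rw [hscale, ENNReal.ofReal_mul (norm_nonneg _)]
  exact mul_le_mul_left (le_cbNorm hunit) _

lemma Costcb_le_Costcb_add {C : ℝ≥0∞} (h : ∀ (n : ℕ) (X : Matrix (Fin n × ι) (Fin n × ι) ℂ),
    X.IsHermitian → cnormAmp S n X ≤ 1 → ENNReal.ofReal ‖ampFun Φ n X - ampFun Ψ n X‖ ≤ C) :
    Costcb S Φ ≤ Costcb S Ψ + C :=
  Costcb_le fun n X hX hXS => calc
    ENNReal.ofReal ‖ampFun Φ n X - X‖
        ≤ ENNReal.ofReal ‖ampFun Ψ n X - X‖ + ENNReal.ofReal ‖ampFun Φ n X - ampFun Ψ n X‖ := by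
      rw [add_comm]
      exact (ENNReal.ofReal_le_ofReal (norm_sub_le_norm_sub_add_norm_sub _ _ _)).trans
        ENNReal.ofReal_add_le
    _ ≤ Costcb S Ψ + C := add_le_add (le_Costcb hX hXS) (h n X hX hXS)

lemma Lipcb_le_Lipcb_add {C : ℝ≥0∞} (h : ∀ (n : ℕ) (X : Matrix (Fin n × ι) (Fin n × ι) ℂ),
    X.IsHermitian → cnormAmp S n X ≤ 1 → ENNReal.ofReal ‖ampFun Φ n X - ampFun Ψ n X‖ ≤ C) :
    Lipcb S Φ ≤ Lipcb S Ψ + 2 * ((S.sup fun s => ‖s‖₊ : ℝ≥0) : ℝ≥0∞) * C :=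
  Lipcb_le fun n X hX hXS => calc
    ENNReal.ofReal (cnormAmp S n (ampFun Φ n X))
        = ENNReal.ofReal (cnormAmp S n (ampFun Ψ n X + (ampFun Φ n X - ampFun Ψ n X))) := by
      rw [add_sub_cancel]
    _ ≤ _ := ofReal_cnormAmp_add_le _ _
    _ ≤ _ := by gcongr; exacts [le_Lipcb hX hXS, h n X hX hXS]

lemma Lipcb_le_one_add_mul_Costcb :
    Lipcb S Φ ≤ 1 + 2 * ((S.sup fun s => ‖s‖₊ : ℝ≥0) : ℝ≥0∞) * Costcb S Φ :=
  Lipcb_le fun n X hX hXS => calc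
    ENNReal.ofReal (cnormAmp S n (ampFun Φ n X))
        = ENNReal.ofReal (cnormAmp S n (X + (ampFun Φ n X - X))) := by rw [add_sub_cancel]
    _ ≤ _ := ofReal_cnormAmp_add_le _ _
    _ ≤ _ := by gcongr; exacts [ENNReal.ofReal_le_one.mpr hXS, le_Costcb hX hXS]

end Suprema

section Expectation

variable {ι : Type*} [Fintype ι] [DecidableEq ι] {S : Finset (Matrix ι ι ℂ)}
  {E : Matrix ι ι ℂ → Matrix ι ι ℂ} {n : ℕ}

lemma ofReal_norm_ampFun_sub_le_Costcb_mul_cbNorm {Φ₁ Φ₂ : Matrix ι ι ℂ →ₗ[ℂ] Matrix ι ι ℂ}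
    (hΦ₁E : ∀ x, Φ₁ (E x) = E x) (hΦ₂E : ∀ x, Φ₂ (E x) = E x)
    {X : Matrix (Fin n × ι) (Fin n × ι) ℂ} (hX : X.IsHermitian) (hXS : cnormAmp S n X ≤ 1) :
    ENNReal.ofReal ‖ampFun Φ₁ n X - ampFun Φ₂ n X‖ ≤
      Costcb S E * cbNorm (fun x => Φ₁ x - Φ₂ x) := by
  have hsplit : ampFun Φ₁ n X - ampFun Φ₂ n X = ampFun ⇑(Φ₁ - Φ₂) n (X - ampFun E n X) := by
    change _ = ampFun Φ₁ n (X - ampFun E n X) - ampFun Φ₂ n (X - ampFun E n X)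
    rw [ampFun_sub_ampFun_of_fixes hΦ₁E, ampFun_sub_ampFun_of_fixes hΦ₂E,
      sub_sub_sub_cancel_right]
  calc ENNReal.ofReal ‖ampFun Φ₁ n X - ampFun Φ₂ n X‖
      ≤ cbNorm ⇑(Φ₁ - Φ₂) * ENNReal.ofReal ‖ampFun E n X - X‖ := by
        rw [hsplit, norm_sub_rev (ampFun E n X)]
        exact ofReal_norm_ampFun_le_cbNorm_mul (Φ₁ - Φ₂) _
    _ ≤ Costcb S E * cbNorm (fun x => Φ₁ x - Φ₂ x) := by
        rw [mul_comm]
        exact mul_le_mul_left (le_Costcb hX hXS) _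

lemma IsUCP.Costcb_le_two_mul {Ψ : Matrix ι ι ℂ → Matrix ι ι ℂ} (hΨ : IsUCP Ψ)
    (hE : ∀ x, (E x)ᴴ = E xᴴ) (hΨE : ∀ x, Ψ (E x) = E x) : Costcb S Ψ ≤ 2 * Costcb S E :=
  Costcb_le fun n X hX hXS => by
    have hY : (X - ampFun E n X).IsHermitian :=
      hX.sub ((ampFun_conjTranspose hE X).trans (congrArg (ampFun E n) hX.eq))
    have hfix := ampFun_sub_ampFun_of_fixes (Ψ := hΨ.toLinearMap) hΨE X
    rw [IsUCP.coe_toLinearMap] at hfix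
    have hsplit : ampFun Ψ n X - X = ampFun Ψ n (X - ampFun E n X) + (ampFun E n X - X) := by
      rw [hfix, sub_add_sub_cancel]
    calc ENNReal.ofReal ‖ampFun Ψ n X - X‖
        ≤ ENNReal.ofReal ‖ampFun Ψ n (X - ampFun E n X)‖ + ENNReal.ofReal ‖ampFun E n X - X‖ := by
          rw [hsplit]
          exact (ENNReal.ofReal_le_ofReal (norm_add_le _ _)).trans ENNReal.ofReal_add_le
      _ ≤ ENNReal.ofReal ‖ampFun E n X - X‖ + ENNReal.ofReal ‖ampFun E n X - X‖ := by
          gcongr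
          rw [← norm_sub_rev]
          exact hΨ.norm_ampFun_le hY
      _ ≤ 2 * Costcb S E := by
          rw [← two_mul]
          gcongr
          exact le_Costcb hX hXS

lemma Lipcb_ne_top_of_Costcb_ne_top {Φ : Matrix ι ι ℂ → Matrix ι ι ℂ} (h : Costcb S Φ ≠ ⊤) :
    Lipcb S Φ ≠ ⊤ :=
  ne_top_of_le_ne_top (by finiteness) Lipcb_le_one_add_mul_Costcb

end Expectation

theorem costcb_lipcb_continuity_general {d : ℕ}
    (S : Finset (Matrix (Fin d) (Fin d) ℂ))
    (Φ₁ Φ₂ E : Matrix (Fin d) (Fin d) ℂ → Matrix (Fin d) (Fin d) ℂ)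
    (hΦ₁ : IsUCP Φ₁) (hΦ₂ : IsUCP Φ₂)
    (hE_herm : ∀ x, (E x)ᴴ = E xᴴ)
    (hΦ₁E : ∀ x, Φ₁ (E x) = E x) (hΦ₂E : ∀ x, Φ₂ (E x) = E x)
    (hκ : Costcb S E ≠ ⊤) :
    (Costcb S Φ₁ ≠ ⊤ ∧ Costcb S Φ₂ ≠ ⊤ ∧ Lipcb S Φ₁ ≠ ⊤ ∧ Lipcb S Φ₂ ≠ ⊤) ∧
    Costcb S Φ₂ ≤ Costcb S Φ₁ + Costcb S E * cbNorm (fun x => Φ₁ x - Φ₂ x) ∧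
    Costcb S Φ₁ ≤ Costcb S Φ₂ + Costcb S E * cbNorm (fun x => Φ₁ x - Φ₂ x) ∧
    Lipcb S Φ₂ ≤ Lipcb S Φ₁ +
      2 * ((S.sup fun s => ‖s‖₊ : ℝ≥0) : ℝ≥0∞) * Costcb S E *
        cbNorm (fun x => Φ₁ x - Φ₂ x) ∧
    Lipcb S Φ₁ ≤ Lipcb S Φ₂ +
      2 * ((S.sup fun s => ‖s‖₊ : ℝ≥0) : ℝ≥0∞) * Costcb S E *
        cbNorm (fun x => Φ₁ x - Φ₂ x) := by
  have hdist : ∀ (n : ℕ) (X : Matrix (Fin n × Fin d) (Fin n × Fin d) ℂ), X.IsHermitian →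
      cnormAmp S n X ≤ 1 → ENNReal.ofReal ‖ampFun Φ₁ n X - ampFun Φ₂ n X‖ ≤
        Costcb S E * cbNorm (fun x => Φ₁ x - Φ₂ x) := fun _ _ =>
    ofReal_norm_ampFun_sub_le_Costcb_mul_cbNorm (Φ₁ := hΦ₁.toLinearMap)
      (Φ₂ := hΦ₂.toLinearMap) hΦ₁E hΦ₂E
  have hdist' : ∀ (n : ℕ) (X : Matrix (Fin n × Fin d) (Fin n × Fin d) ℂ), X.IsHermitian →
      cnormAmp S n X ≤ 1 → ENNReal.ofReal ‖ampFun Φ₂ n X - ampFun Φ₁ n X‖ ≤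
        Costcb S E * cbNorm (fun x => Φ₁ x - Φ₂ x) := fun n X hX hXS => by
    rw [norm_sub_rev]; exact hdist n X hX hXS
  have hcost₁ : Costcb S Φ₁ ≠ ⊤ :=
    ne_top_of_le_ne_top (by finiteness) (hΦ₁.Costcb_le_two_mul hE_herm hΦ₁E)
  have hcost₂ : Costcb S Φ₂ ≠ ⊤ :=
    ne_top_of_le_ne_top (by finiteness) (hΦ₂.Costcb_le_two_mul hE_herm hΦ₂E)
  simp only [mul_assoc _ (Costcb S E)]
  exact ⟨⟨hcost₁, hcost₂, Lipcb_ne_top_of_Costcb_ne_top hcost₁,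
      Lipcb_ne_top_of_Costcb_ne_top hcost₂⟩,
    Costcb_le_Costcb_add hdist', Costcb_le_Costcb_add hdist,
    Lipcb_le_Lipcb_add hdist', Lipcb_le_Lipcb_add hdist⟩

/-- Continuity of the complete transportation cost and the complete
Lipschitz constant in the cb (diamond) norm: for UCP maps `Φ₁, Φ₂` fixing a conditional
expectation `E` onto the commutant of `S` with `κ(S) := Cost^{cb}_S(E) < ∞`,
`|Cost^{cb}_S(Φ₂) − Cost^{cb}_S(Φ₁)| ≤ κ(S)·‖Φ₁ − Φ₂‖_{cb}` and
`|Lip^{cb}_S(Φ₂) − Lip^{cb}_S(Φ₁)| ≤ 2·(max_{s∈S}‖s‖)·κ(S)·‖Φ₁ − Φ₂‖_{cb}`,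
all the quantities on the left-hand sides being finite. -/
theorem costcb_lipcb_continuity {d : ℕ}
    (S : Finset (Matrix (Fin d) (Fin d) ℂ))
    (Φ₁ Φ₂ E : Matrix (Fin d) (Fin d) ℂ → Matrix (Fin d) (Fin d) ℂ)
    (hΦ₁ : IsUCP Φ₁) (hΦ₂ : IsUCP Φ₂)
    (hE_lin : ∀ (c : ℂ) (x y), E (c • x + y) = c • E x + E y)
    (hE_herm : ∀ x, (E x)ᴴ = E xᴴ)
    (hE_comm : ∀ s ∈ S, ∀ x, s * E x = E x * s)
    (hΦ₁E : ∀ x, Φ₁ (E x) = E x) (hΦ₂E : ∀ x, Φ₂ (E x) = E x)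
    (hκ : Costcb S E ≠ ⊤) :
    (Costcb S Φ₁ ≠ ⊤ ∧ Costcb S Φ₂ ≠ ⊤ ∧ Lipcb S Φ₁ ≠ ⊤ ∧ Lipcb S Φ₂ ≠ ⊤) ∧
    Costcb S Φ₂ ≤ Costcb S Φ₁ + Costcb S E * cbNorm (fun x => Φ₁ x - Φ₂ x) ∧
    Costcb S Φ₁ ≤ Costcb S Φ₂ + Costcb S E * cbNorm (fun x => Φ₁ x - Φ₂ x) ∧
    Lipcb S Φ₂ ≤ Lipcb S Φ₁ +
      2 * ((S.sup fun s => ‖s‖₊ : ℝ≥0) : ℝ≥0∞) * Costcb S E *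
        cbNorm (fun x => Φ₁ x - Φ₂ x) ∧
    Lipcb S Φ₁ ≤ Lipcb S Φ₂ +
      2 * ((S.sup fun s => ‖s‖₊ : ℝ≥0) : ℝ≥0∞) * Costcb S E *
        cbNorm (fun x => Φ₁ x - Φ₂ x) :=
  costcb_lipcb_continuity_general S Φ₁ Φ₂ E hΦ₁ hΦ₂ hE_herm hΦ₁E hΦ₂E hκ

end
end

section
/- Let G be a finite group and S ⊆ G a symmetric generating set (S = S⁻¹ and S generates G). Define the word length ℓ_S : G → ℕ by ℓ_S(e) = 0 and, for g ≠ e, ℓ_S(g) = min{ n ≥ 1 : g = s₁s₂⋯s_n with each sᵢ ∈ S }. Then sup{ max_{g∈G} | f(g) − (1/|G|)·∑_{h∈G} f(h) | : f : G → ℝ with |f(sg) − f(g)| ≤ 1 for all s ∈ S and g ∈ G } = (1/|G|)·∑_{g∈G} ℓ_S(g). That is, the transportation cost of the averaging conditional expectation E_fix(f) = ((1/|G|)∑_{h∈G} f(h))·1_G, with respect to the Lipschitz seminorm |||f|||_S = max_{s∈S,g∈G} |f(sg) − f(g)|, equals the expected word length of G with respect to S. -/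
/-! An `S`-Lipschitz function changes by at most `ℓ_S(g h⁻¹)` between `g` and `h` (walk along a
shortest word), so its deviation from its mean at `g` is at most the mean of `h ↦ ℓ_S(g h⁻¹)`,
which is the expected word length. The word length itself is `S`-Lipschitz and attains this
bound at the identity, where it vanishes. -/

noncomputable section

/-- The word length of `g` with respect to a generating set `S`: the least `n` such that
`g` is a product of `n` elements of `S` (so `ℓ_S(e) = 0`, via the empty product). -/
def wordLength {G : Type*} [Group G] (S : Set G) (g : G) : ℕ :=
  sInf {n : ℕ | ∃ l : List G, (∀ x ∈ l, x ∈ S) ∧ l.length = n ∧ l.prod = g}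

open Finset

lemma abs_sub_sum_div_card_le {α : Type*} [Fintype α] (f : α → ℝ) (a : α) :
    |f a - (∑ b, f b) / Fintype.card α| ≤ (∑ b, |f a - f b|) / Fintype.card α := by
  have : Nonempty α := ⟨a⟩
  have hcard : (0 : ℝ) < Fintype.card α := by exact_mod_cast Fintype.card_pos
  have hmean : f a - (∑ b, f b) / Fintype.card α = (∑ b, (f a - f b)) / Fintype.card α := by
    rw [sum_sub_distrib, sum_const, card_univ, nsmul_eq_mul]
    field_simp
  rw [hmean, abs_div, abs_of_pos hcard]
  gcongr
  exact abs_sum_le_sum_abs _ _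

namespace wordLength

variable {G : Type*} [Group G] {S : Set G}

lemma exists_list_prod_eq (hS_symm : ∀ s ∈ S, s⁻¹ ∈ S) (hS_gen : Subgroup.closure S = ⊤)
    (g : G) : ∃ l : List G, (∀ x ∈ l, x ∈ S) ∧ l.prod = g := by
  have hg : g ∈ Submonoid.closure (S ∪ S⁻¹) := by
    rw [← Subgroup.closure_toSubmonoid, hS_gen]
    trivial
  obtain ⟨l, hl, hprod⟩ := Submonoid.exists_list_of_mem_closure hg
  refine ⟨l, fun x hx => ?_, hprod⟩
  rcases hl x hx with hx | hx
  · exact hx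
  · simpa using hS_symm _ hx

lemma exists_list_length_eq (hS_symm : ∀ s ∈ S, s⁻¹ ∈ S) (hS_gen : Subgroup.closure S = ⊤)
    (g : G) : ∃ l : List G, (∀ x ∈ l, x ∈ S) ∧ l.length = wordLength S g ∧ l.prod = g := by
  obtain ⟨l, hl, hprod⟩ := exists_list_prod_eq hS_symm hS_gen g
  exact Nat.sInf_mem (s := {n | ∃ l : List G, (∀ x ∈ l, x ∈ S) ∧ l.length = n ∧ l.prod = g})
    ⟨l.length, l, hl, rfl, hprod⟩

lemma le_length {l : List G} (hl : ∀ x ∈ l, x ∈ S) : wordLength S l.prod ≤ l.length :=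
  Nat.sInf_le ⟨l, hl, rfl, rfl⟩

@[simp]
lemma one : wordLength S (1 : G) = 0 :=
  Nat.le_zero.mp (le_length (l := []) (by simp))

lemma mul_le_add_one (hS_symm : ∀ s ∈ S, s⁻¹ ∈ S) (hS_gen : Subgroup.closure S = ⊤)
    {s : G} (hs : s ∈ S) (g : G) : wordLength S (s * g) ≤ wordLength S g + 1 := by
  obtain ⟨l, hl, hlen, rfl⟩ := exists_list_length_eq hS_symm hS_gen g
  have hsl : ∀ x ∈ s :: l, x ∈ S := by
    simpa only [List.forall_mem_cons] using ⟨hs, hl⟩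
  simpa [hlen] using le_length hsl

end wordLength

/-- `|||f|||_S ≤ 1` in the notation of the statement. -/
def LipschitzWrt {G : Type*} [Mul G] (S : Set G) (f : G → ℝ) : Prop :=
  ∀ s ∈ S, ∀ g : G, |f (s * g) - f g| ≤ 1

section Lipschitz

variable {G : Type*} [Group G] {S : Set G}

lemma lipschitzWrt_wordLength (hS_symm : ∀ s ∈ S, s⁻¹ ∈ S) (hS_gen : Subgroup.closure S = ⊤) :
    LipschitzWrt S fun g => (wordLength S g : ℝ) := by
  intro s hs g
  have hup : (wordLength S (s * g) : ℝ) ≤ wordLength S g + 1 := by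
    exact_mod_cast wordLength.mul_le_add_one hS_symm hS_gen hs g
  have hdown : (wordLength S g : ℝ) ≤ wordLength S (s * g) + 1 := by
    have h := wordLength.mul_le_add_one hS_symm hS_gen (hS_symm s hs) (s * g)
    rw [inv_mul_cancel_left] at h
    exact_mod_cast h
  exact abs_sub_le_iff.2 ⟨by linarith, by linarith⟩

namespace LipschitzWrt

variable {f : G → ℝ}

lemma abs_list_prod_mul_sub_le (hf : LipschitzWrt S f) {l : List G} (hl : ∀ x ∈ l, x ∈ S)
    (h : G) : |f (l.prod * h) - f h| ≤ l.length := by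
  induction l with
  | nil => simp
  | cons s t ih =>
    rw [List.forall_mem_cons] at hl
    calc |f ((s :: t).prod * h) - f h|
        ≤ |f (s * (t.prod * h)) - f (t.prod * h)| + |f (t.prod * h) - f h| := by
          rw [List.prod_cons, mul_assoc]
          exact abs_sub_le _ _ _
      _ ≤ 1 + t.length := add_le_add (hf s hl.1 _) (ih hl.2)
      _ = (s :: t).length := by push_cast [List.length_cons]; ring

lemma abs_sub_le_wordLength (hf : LipschitzWrt S f) (hS_symm : ∀ s ∈ S, s⁻¹ ∈ S)
    (hS_gen : Subgroup.closure S = ⊤) (g h : G) :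
    |f g - f h| ≤ wordLength S (g * h⁻¹) := by
  obtain ⟨l, hl, hlen, hprod⟩ := wordLength.exists_list_length_eq hS_symm hS_gen (g * h⁻¹)
  simpa [hprod, hlen] using hf.abs_list_prod_mul_sub_le hl h

lemma abs_sub_average_le [Fintype G] (hf : LipschitzWrt S f) (hS_symm : ∀ s ∈ S, s⁻¹ ∈ S)
    (hS_gen : Subgroup.closure S = ⊤) (g : G) :
    |f g - (∑ h, f h) / Fintype.card G| ≤ (∑ h, (wordLength S h : ℝ)) / Fintype.card G := by
  have htranslate : ∑ h, (wordLength S (g * h⁻¹) : ℝ) = ∑ h, (wordLength S h : ℝ) :=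
    Fintype.sum_equiv ((Equiv.inv G).trans (Equiv.mulLeft g)) _ _ fun _ => rfl
  calc |f g - (∑ h, f h) / Fintype.card G|
      ≤ (∑ h, |f g - f h|) / Fintype.card G := abs_sub_sum_div_card_le f g
    _ ≤ (∑ h, (wordLength S (g * h⁻¹) : ℝ)) / Fintype.card G := by
      gcongr with h
      exact hf.abs_sub_le_wordLength hS_symm hS_gen g h
    _ = (∑ h, (wordLength S h : ℝ)) / Fintype.card G := by rw [htranslate]

end LipschitzWrt

end Lipschitz

/-- For a finite group `G` with a symmetric generating set `S`, the
transportation cost of the averaging conditional expectation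
`E_fix(f) = (1/|G|) ∑_h f(h)` with respect to the Lipschitz seminorm
`|||f|||_S = max_{s∈S,g∈G} |f(sg) − f(g)|` equals the expected word length
`(1/|G|) ∑_g ℓ_S(g)`. -/
theorem cost_averaging_eq_expected_word_length {G : Type*} [Group G] [Fintype G]
    (S : Set G) (hS_symm : ∀ s ∈ S, s⁻¹ ∈ S) (hS_gen : Subgroup.closure S = ⊤) :
    sSup {r : ℝ | ∃ f : G → ℝ,
        (∀ s ∈ S, ∀ g : G, |f (s * g) - f g| ≤ 1) ∧
        r = ⨆ g : G, |f g - (∑ h : G, f h) / (Fintype.card G : ℝ)|}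
      = (∑ g : G, (wordLength S g : ℝ)) / (Fintype.card G : ℝ) := by
  set W := (∑ g : G, (wordLength S g : ℝ)) / (Fintype.card G : ℝ)
  have hbound : ∀ f : G → ℝ, LipschitzWrt S f →
      ⨆ g : G, |f g - (∑ h : G, f h) / (Fintype.card G : ℝ)| ≤ W :=
    fun f hf => ciSup_le (hf.abs_sub_average_le hS_symm hS_gen)
  set ℓ : G → ℝ := fun g => (wordLength S g : ℝ)
  have hℓ_one : |ℓ 1 - (∑ h, ℓ h) / Fintype.card G| = W := by
    rw [abs_sub_comm]
    simp only [ℓ, wordLength.one, CharP.cast_eq_zero, sub_zero]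
    exact abs_of_nonneg (by positivity)
  have hℓ_attains : W = ⨆ g : G, |ℓ g - (∑ h, ℓ h) / (Fintype.card G : ℝ)| :=
    le_antisymm (hℓ_one ▸ le_ciSup (f := fun g => |ℓ g - (∑ h, ℓ h) / Fintype.card G|)
        (Set.finite_range _).bddAbove 1)
      (hbound ℓ (lipschitzWrt_wordLength hS_symm hS_gen))
  refine IsGreatest.csSup_eq ⟨⟨ℓ, lipschitzWrt_wordLength hS_symm hS_gen, hℓ_attains⟩, ?_⟩
  rintro r ⟨f, hf, rfl⟩
  exact hbound f hf
end
end

section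
/- Let σ ∈ M_d be a positive definite density matrix and let ρ : ℝ → M_d be a continuously differentiable family such that ρ(t) is a positive definite density matrix (Hermitian, positive definite, trace 1) for every t in a neighborhood of 0. Then the function t ↦ D(ρ(t) ‖ σ) is differentiable at 0 and its derivative satisfies (d/dt) D(ρ(t) ‖ σ) |_{t=0} = tr( ρ′(0) · (log ρ(0) − log σ) ), where log denotes the spectral functional-calculus logarithm of positive definite Hermitian matrices. -/
/-!
Write `D(ρ‖σ) = tr φ(ρ) − Re tr(ρ log σ)` with `φ x = x log x`; the second term is linear in `ρ`.
For the first, compare `tr φ(B)` with its tangent at `A = ρ 0`, whose gradient is `log A + 1`.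
In an orthonormal eigenbasis `(uᵢ, λᵢ)` of `A` the Bregman gap is `∑ᵢ ⟨uᵢ, (φ(B) − gᵢ(B)) uᵢ⟩`, where `gᵢ`
is the tangent line of `φ` at `λᵢ`. The scalar bounds `0 ≤ φ x − gᵢ x ≤ (x − λᵢ)² / λᵢ` pass to `B`
by monotonicity of the functional calculus, so `0 ≤ gap ≤ Re tr((B − A)² A⁻¹)`. Along `B = ρ t`
the upper bound is quadratic in `ρ t − ρ 0`, hence the gap has derivative `0` at `t = 0`; the
constant `1` in the gradient drops out because `tr ρ′(0) = 0`.
-/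

open scoped ENNReal NNReal ComplexOrder Matrix Matrix.Norms.L2Operator

noncomputable section

/-- Matrix logarithm of a (positive definite Hermitian) matrix, via the spectral
continuous functional calculus. -/
def mlog {ι : Type*} [Fintype ι] [DecidableEq ι] (a : Matrix ι ι ℂ) : Matrix ι ι ℂ :=
  cfc Real.log a

/-- `tr(ρ log ρ)`, defined via functional calculus applied to `x ↦ x log x`
(which vanishes at `0`). -/
def traceEnt {ι : Type*} [Fintype ι] [DecidableEq ι] (ρ : Matrix ι ι ℂ) : ℝ :=
  (cfc (fun x : ℝ => x * Real.log x) ρ).trace.re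

/-- Umegaki relative entropy `D(ρ‖σ) = tr(ρ log ρ) − tr(ρ log σ)` (for `σ` positive
definite). -/
def relEnt {ι : Type*} [Fintype ι] [DecidableEq ι] (ρ σ : Matrix ι ι ℂ) : ℝ :=
  traceEnt ρ - (ρ * mlog σ).trace.re

namespace Real

lemma mul_log_tangent_le {x l : ℝ} (hx : 0 ≤ x) (hl : 0 < l) :
    l * log l + (log l + 1) * (x - l) ≤ x * log x := by
  rcases hx.eq_or_lt with rfl | hx
  · nlinarith
  · have h := mul_le_mul_of_nonneg_left (log_le_sub_one_of_pos (div_pos hl hx)) hx.le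
    rw [log_div hl.ne' hx.ne', mul_sub_one, mul_div_cancel₀ _ hx.ne'] at h
    linarith

lemma mul_log_le_tangent_add_sq {x l : ℝ} (hx : 0 ≤ x) (hl : 0 < l) :
    x * log x ≤ l * log l + (log l + 1) * (x - l) + l⁻¹ * (x - l) ^ 2 := by
  rcases hx.eq_or_lt with rfl | hx
  · rw [zero_sub, neg_sq, sq, inv_mul_cancel_left₀ hl.ne']
    linarith
  · have h := mul_le_mul_of_nonneg_left (log_le_sub_one_of_pos (div_pos hx hl)) hx.le
    rw [log_div hx.ne' hl.ne'] at h
    have hsq : x * (x / l - 1) = l⁻¹ * (x - l) ^ 2 + (x - l) := by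
      field_simp
      ring
    nlinarith

end Real

lemma cfc_quadratic {R : Type*} [Ring R] [StarRing R] [TopologicalSpace R] [Algebra ℝ R]
    [ContinuousFunctionalCalculus ℝ R IsSelfAdjoint] {a : R} (ha : IsSelfAdjoint a)
    (c₀ c₁ c₂ l : ℝ) :
    cfc (fun x : ℝ => c₀ + c₁ * (x - l) + c₂ * (x - l) ^ 2) a
      = algebraMap ℝ R c₀ + c₁ • (a - algebraMap ℝ R l) + c₂ • (a - algebraMap ℝ R l) ^ 2 := by
  have hsub : cfc (fun x : ℝ => x - l) a = a - algebraMap ℝ R l := by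
    rw [cfc_sub (a := a) (fun x => x) (fun _ => l), cfc_id' ℝ a, cfc_const l a]
  rw [cfc_add (a := a) (fun x => c₀ + c₁ * (x - l)) (fun x => c₂ * (x - l) ^ 2),
    cfc_const_add c₀ (fun x => c₁ * (x - l)) a, cfc_const_mul c₁ (fun x => x - l) a,
    cfc_const_mul c₂ (fun x => (x - l) ^ 2) a, cfc_pow (fun x => x - l) 2 a, hsub]

lemma OrthonormalBasis.star_dotProduct_self {ι n 𝕜 : Type*} [Fintype ι] [Fintype n] [RCLike 𝕜]
    (b : OrthonormalBasis ι 𝕜 (EuclideanSpace 𝕜 n)) (i : ι) : star ⇑(b i) ⬝ᵥ ⇑(b i) = 1 := by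
  rw [dotProduct_comm, ← EuclideanSpace.inner_eq_star_dotProduct, inner_self_eq_norm_sq_to_K,
    b.norm_eq_one, RCLike.ofReal_one, one_pow]

namespace Matrix

variable {n 𝕜 : Type*} [Fintype n] [RCLike 𝕜]

lemma IsHermitian.star_mulVec_dotProduct {H : Matrix n n 𝕜} (hH : H.IsHermitian) (u w : n → 𝕜) :
    star (H *ᵥ u) ⬝ᵥ w = star u ⬝ᵥ (H *ᵥ w) := by
  rw [star_mulVec, hH.eq, dotProduct_mulVec]

lemma trace_eq_sum_star_dotProduct_mulVec {ι : Type*} [Fintype ι] [DecidableEq n]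
    (b : OrthonormalBasis ι 𝕜 (EuclideanSpace 𝕜 n)) (M : Matrix n n 𝕜) :
    M.trace = ∑ i, star ⇑(b i) ⬝ᵥ (M *ᵥ ⇑(b i)) := by
  have h := LinearMap.trace_eq_sum_inner (toLpLin 2 2 M) b
  rw [toLpLin_eq_toLin, LinearMap.trace_eq_matrix_trace _ (PiLp.basisFun 2 𝕜 n),
    LinearMap.toMatrix_toLin, ← toLpLin_eq_toLin] at h
  simp_rw [h, EuclideanSpace.inner_eq_star_dotProduct, toLpLin_apply, dotProduct_comm]

variable [DecidableEq n]

open scoped MatrixOrder in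
lemma re_star_dotProduct_cfc_mulVec_le (B : Matrix n n 𝕜) {f g : ℝ → ℝ}
    (h : ∀ x ∈ spectrum ℝ B, f x ≤ g x) (v : n → 𝕜) :
    RCLike.re (star v ⬝ᵥ (cfc f B *ᵥ v)) ≤ RCLike.re (star v ⬝ᵥ (cfc g B *ᵥ v)) := by
  have hfg := cfc_mono h ((spectrum ℝ B).toFinite.continuousOn f)
    ((spectrum ℝ B).toFinite.continuousOn g)
  have h := (le_iff.mp hfg).re_dotProduct_nonneg v
  rwa [sub_mulVec, dotProduct_sub, map_sub, sub_nonneg] at h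

lemma IsHermitian.cfc_mulVec_eigenvectorBasis {A : Matrix n n 𝕜} (hA : A.IsHermitian)
    (f : ℝ → ℝ) (i : n) :
    cfc f A *ᵥ ⇑(hA.eigenvectorBasis i)
      = (f (hA.eigenvalues i) : 𝕜) • ⇑(hA.eigenvectorBasis i) := by
  rw [hA.cfc_eq, IsHermitian.cfc, Unitary.conjStarAlgAut_apply, ← mulVec_mulVec, ← mulVec_mulVec,
    star_eigenvectorUnitary_mulVec, diagonal_mulVec_single, mul_one,
    ← mul_one ((RCLike.ofReal ∘ f ∘ hA.eigenvalues) i), ← smul_eq_mul, Pi.single_smul,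
    mulVec_smul, eigenvectorUnitary_mulVec]
  rfl

lemma IsHermitian.trace_mul_cfc {A : Matrix n n 𝕜} (hA : A.IsHermitian) (M : Matrix n n 𝕜)
    (f : ℝ → ℝ) :
    (M * cfc f A).trace = ∑ i, (f (hA.eigenvalues i) : 𝕜) *
      (star ⇑(hA.eigenvectorBasis i) ⬝ᵥ (M *ᵥ ⇑(hA.eigenvectorBasis i))) := by
  rw [trace_eq_sum_star_dotProduct_mulVec hA.eigenvectorBasis]
  simp_rw [← mulVec_mulVec, hA.cfc_mulVec_eigenvectorBasis, mulVec_smul, dotProduct_smul,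
    smul_eq_mul]

lemma sub_algebraMap_mulVec_of_mulVec_eq_smul {A : Matrix n n 𝕜} {u : n → 𝕜} {l : ℝ}
    (hAu : A *ᵥ u = l • u) (B : Matrix n n 𝕜) :
    (B - algebraMap ℝ _ l) *ᵥ u = (B - A) *ᵥ u := by
  rw [sub_mulVec, sub_mulVec, hAu, Algebra.algebraMap_eq_smul_one, smul_mulVec, one_mulVec]

lemma star_dotProduct_cfc_quadratic_mulVec {A B : Matrix n n 𝕜} (hA : A.IsHermitian)
    (hB : B.IsHermitian) {u : n → 𝕜} {l : ℝ} (hu : star u ⬝ᵥ u = 1) (hAu : A *ᵥ u = l • u)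
    (c₀ c₁ c₂ : ℝ) :
    star u ⬝ᵥ (cfc (fun x => c₀ + c₁ * (x - l) + c₂ * (x - l) ^ 2) B *ᵥ u)
      = c₀ + c₁ * (star u ⬝ᵥ ((B - A) *ᵥ u)) + c₂ * (star u ⬝ᵥ (((B - A) * (B - A)) *ᵥ u)) := by
  have hBl : (B - algebraMap ℝ _ l).IsHermitian := hB.isSelfAdjoint.sub (.algebraMap _ (.all _))
  have hsq : star u ⬝ᵥ ((B - algebraMap ℝ _ l) ^ 2 *ᵥ u)
      = star u ⬝ᵥ (((B - A) * (B - A)) *ᵥ u) := by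
    rw [sq, ← mulVec_mulVec, ← mulVec_mulVec, ← hBl.star_mulVec_dotProduct,
      sub_algebraMap_mulVec_of_mulVec_eq_smul hAu, (hB.sub hA).star_mulVec_dotProduct]
  rw [cfc_quadratic hB.isSelfAdjoint, add_mulVec, add_mulVec, dotProduct_add, dotProduct_add,
    Algebra.algebraMap_eq_smul_one c₀, smul_mulVec, smul_mulVec, smul_mulVec, one_mulVec,
    dotProduct_smul, dotProduct_smul, dotProduct_smul, hsq, hu,
    sub_algebraMap_mulVec_of_mulVec_eq_smul hAu]
  simp only [RCLike.real_smul_eq_coe_mul, mul_one]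

lemma PosDef.cfc_inv {A : Matrix n n 𝕜} (hA : A.PosDef) : cfc (fun x : ℝ => x⁻¹) A = A⁻¹ := by
  have h := cfc_inv_id (R := ℝ) hA.isUnit.unit hA.isHermitian.isSelfAdjoint
  rwa [IsUnit.unit_spec, coe_units_inv, IsUnit.unit_spec] at h

end Matrix

def traceEntBregman {n : Type*} [Fintype n] [DecidableEq n] (A B : Matrix n n ℂ) : ℝ :=
  traceEnt B - traceEnt A - ((B - A) * (mlog A + 1)).trace.re

section Klein

open Matrix
open scoped MatrixOrder

variable {n : Type*} [Fintype n] [DecidableEq n] {A B : Matrix n n ℂ}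

lemma Matrix.IsHermitian.cfc_log_add_one (hA : A.IsHermitian) :
    cfc (fun x => Real.log x + 1) A = mlog A + 1 := by
  rw [cfc_add_const 1 Real.log A ((spectrum ℝ A).toFinite.continuousOn _), map_one]
  rfl

lemma Matrix.IsHermitian.traceEnt_eq_sum (hA : A.IsHermitian) :
    traceEnt A = ∑ i, hA.eigenvalues i * Real.log (hA.eigenvalues i) := by
  rw [traceEnt, ← one_mul (cfc _ A), hA.trace_mul_cfc, Complex.re_sum]
  simp only [one_mulVec, OrthonormalBasis.star_dotProduct_self, mul_one, Complex.coe_algebraMap,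
    Complex.ofReal_re]

lemma Matrix.IsHermitian.traceEntBregman_eq_sum (hA : A.IsHermitian) (B : Matrix n n ℂ) :
    traceEntBregman A B = ∑ i,
      ((star ⇑(hA.eigenvectorBasis i) ⬝ᵥ
          (cfc (fun x => x * Real.log x) B *ᵥ ⇑(hA.eigenvectorBasis i))).re
        - hA.eigenvalues i * Real.log (hA.eigenvalues i)
        - (Real.log (hA.eigenvalues i) + 1) *
          (star ⇑(hA.eigenvectorBasis i) ⬝ᵥ ((B - A) *ᵥ ⇑(hA.eigenvectorBasis i))).re) := by
  rw [traceEntBregman, hA.traceEnt_eq_sum, traceEnt, ← hA.cfc_log_add_one, hA.trace_mul_cfc,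
    trace_eq_sum_star_dotProduct_mulVec hA.eigenvectorBasis, Complex.re_sum, Complex.re_sum,
    ← Finset.sum_sub_distrib, ← Finset.sum_sub_distrib]
  simp only [Complex.coe_algebraMap, Complex.re_ofReal_mul]

lemma traceEntBregman_nonneg (hA : A.PosDef) (hB : B.PosSemidef) : 0 ≤ traceEntBregman A B := by
  rw [hA.isHermitian.traceEntBregman_eq_sum]
  refine Finset.sum_nonneg fun i _ => ?_
  set l := hA.isHermitian.eigenvalues i
  have h := re_star_dotProduct_cfc_mulVec_le B
    (f := fun x => l * Real.log l + (Real.log l + 1) * (x - l) + 0 * (x - l) ^ 2)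
    (g := fun x => x * Real.log x) (fun x hx => by
      simpa using Real.mul_log_tangent_le (spectrum_nonneg_of_nonneg hB.nonneg hx)
        (hA.eigenvalues_pos i)) ⇑(hA.isHermitian.eigenvectorBasis i)
  rw [star_dotProduct_cfc_quadratic_mulVec hA.isHermitian hB.isHermitian
    (OrthonormalBasis.star_dotProduct_self _ i) (hA.isHermitian.mulVec_eigenvectorBasis i)] at h
  simp only [Complex.coe_algebraMap, Complex.ofReal_zero, zero_mul, add_zero, RCLike.re_to_complex,
    Complex.add_re, Complex.re_ofReal_mul, Complex.ofReal_re] at h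
  linarith

lemma traceEntBregman_le (hA : A.PosDef) (hB : B.PosSemidef) :
    traceEntBregman A B ≤ ((B - A) * (B - A) * A⁻¹).trace.re := by
  rw [hA.isHermitian.traceEntBregman_eq_sum, ← hA.cfc_inv, hA.isHermitian.trace_mul_cfc,
    Complex.re_sum]
  refine Finset.sum_le_sum fun i _ => ?_
  set l := hA.isHermitian.eigenvalues i
  have h := re_star_dotProduct_cfc_mulVec_le B (f := fun x => x * Real.log x)
    (g := fun x => l * Real.log l + (Real.log l + 1) * (x - l) + l⁻¹ * (x - l) ^ 2)
    (fun x hx => Real.mul_log_le_tangent_add_sq (spectrum_nonneg_of_nonneg hB.nonneg hx)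
      (hA.eigenvalues_pos i)) ⇑(hA.isHermitian.eigenvectorBasis i)
  rw [star_dotProduct_cfc_quadratic_mulVec hA.isHermitian hB.isHermitian
    (OrthonormalBasis.star_dotProduct_self _ i) (hA.isHermitian.mulVec_eigenvectorBasis i)] at h
  simp only [Complex.coe_algebraMap, RCLike.re_to_complex, Complex.add_re, Complex.re_ofReal_mul,
    Complex.ofReal_re] at h ⊢
  linarith

end Klein

open Filter Topology

lemma HasDerivAt.re_trace {n : Type*} [Fintype n] [DecidableEq n] {f : ℝ → Matrix n n ℂ}
    {f' : Matrix n n ℂ} {x : ℝ} (hf : HasDerivAt f f' x) :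
    HasDerivAt (fun t => (f t).trace.re) f'.trace.re x := by
  let L : Matrix n n ℂ →L[ℝ] ℝ :=
    Complex.reCLM.comp (Matrix.traceLinearMap n ℝ ℂ).toContinuousLinearMap
  exact L.hasFDerivAt.comp_hasDerivAt x hf

lemma hasDerivAt_zero_of_nonneg_of_le {r q : ℝ → ℝ} {x : ℝ} (hq : HasDerivAt q 0 x)
    (hqx : q x = 0) (h : ∀ᶠ t in 𝓝 x, 0 ≤ r t ∧ r t ≤ q t) : HasDerivAt r 0 x := by
  have hrx : r x = 0 := le_antisymm (hqx ▸ h.self_of_nhds.2) h.self_of_nhds.1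
  rw [hasDerivAt_iff_isLittleO] at hq ⊢
  simp only [hrx, hqx, sub_zero, smul_zero] at hq ⊢
  refine Asymptotics.IsBigO.trans_isLittleO (.of_bound 1 (h.mono fun t ht => ?_)) hq
  rw [Real.norm_eq_abs, Real.norm_eq_abs, abs_of_nonneg ht.1, one_mul]
  exact ht.2.trans (le_abs_self _)

theorem hasDerivAt_traceEnt {n : Type*} [Fintype n] [DecidableEq n] {ρ : ℝ → Matrix n n ℂ}
    {ρ' : Matrix n n ℂ} {x : ℝ} (hρ : HasDerivAt ρ ρ' x) (hx : (ρ x).PosDef)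
    (hpos : ∀ᶠ t in 𝓝 x, (ρ t).PosSemidef) :
    HasDerivAt (fun t => traceEnt (ρ t)) (ρ' * (mlog (ρ x) + 1)).trace.re x := by
  have hδ : HasDerivAt (fun t => ρ t - ρ x) ρ' x := hρ.sub_const _
  have hlin : HasDerivAt (fun t => ((ρ t - ρ x) * (mlog (ρ x) + 1)).trace.re)
      (ρ' * (mlog (ρ x) + 1)).trace.re x :=
    (hδ.mul_const _).re_trace
  have hgap : HasDerivAt (fun t => traceEntBregman (ρ x) (ρ t)) 0 x := by
    refine hasDerivAt_zero_of_nonneg_of_le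
      (q := fun t => ((ρ t - ρ x) * (ρ t - ρ x) * (ρ x)⁻¹).trace.re) ?_ (by simp)
      (hpos.mono fun t ht => ⟨traceEntBregman_nonneg hx ht, traceEntBregman_le hx ht⟩)
    simpa using ((hδ.mul hδ).mul_const (ρ x)⁻¹).re_trace
  have hsplit : (fun t => traceEnt (ρ t)) = fun t => traceEnt (ρ x) +
      (((ρ t - ρ x) * (mlog (ρ x) + 1)).trace.re + traceEntBregman (ρ x) (ρ t)) := by
    funext t
    unfold traceEntBregman
    ring
  rw [hsplit, ← add_zero (ρ' * (mlog (ρ x) + 1)).trace.re]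
  exact (hlin.add hgap).const_add _

theorem hasDerivAt_relEnt_general {d : ℕ}
    (σ : Matrix (Fin d) (Fin d) ℂ)
    (ρ : ℝ → Matrix (Fin d) (Fin d) ℂ)
    (hρ : ContDiff ℝ 1 ρ)
    (hρd : ∀ᶠ t in nhds (0 : ℝ), (ρ t).PosDef ∧ (ρ t).trace = 1) :
    HasDerivAt (fun t => relEnt (ρ t) σ)
      ((deriv ρ 0 * (mlog (ρ 0) - mlog σ)).trace.re) 0 := by
  have hD : HasDerivAt ρ (deriv ρ 0) 0 := (hρ.differentiable one_ne_zero 0).hasDerivAt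
  have htr : (deriv ρ 0).trace.re = 0 := hD.re_trace.unique <|
    (hasDerivAt_const 0 1).congr_of_eventuallyEq (hρd.mono fun t ht => by simp [ht.2])
  have hent := hasDerivAt_traceEnt hD hρd.self_of_nhds.1 (hρd.mono fun t ht => ht.1.posSemidef)
  have hval : (deriv ρ 0 * (mlog (ρ 0) - mlog σ)).trace.re
      = (deriv ρ 0 * (mlog (ρ 0) + 1)).trace.re - (deriv ρ 0 * mlog σ).trace.re := by
    rw [Matrix.mul_add, Matrix.mul_sub, Matrix.mul_one, Matrix.trace_add, Matrix.trace_sub,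
      Complex.add_re, Complex.sub_re, htr, add_zero]
  rw [hval]
  exact hent.sub (hD.mul_const (mlog σ)).re_trace

/-- Derivative of the relative entropy: if `σ` is a positive definite
density matrix and `ρ : ℝ → M_d` is a `C¹` family of positive definite density matrices
near `0`, then `t ↦ D(ρ(t)‖σ)` is differentiable at `0` with derivative
`tr(ρ′(0)·(log ρ(0) − log σ))`. -/
theorem hasDerivAt_relEnt {d : ℕ}
    (σ : Matrix (Fin d) (Fin d) ℂ) (hσ : σ.PosDef) (hσtr : σ.trace = 1)
    (ρ : ℝ → Matrix (Fin d) (Fin d) ℂ)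
    (hρ : ContDiff ℝ 1 ρ)
    (hρd : ∀ᶠ t in nhds (0 : ℝ), (ρ t).PosDef ∧ (ρ t).trace = 1) :
    HasDerivAt (fun t => relEnt (ρ t) σ)
      ((deriv ρ 0 * (mlog (ρ 0) - mlog σ)).trace.re) 0 :=
  hasDerivAt_relEnt_general σ ρ hρ hρd
end
end

section
/- Let p ∈ [0,1] and let L be a seminorm on M_2 (the 2×2 complex matrices) satisfying L(c·1) = 0 for every scalar c. Then for every positive definite 2×2 density matrix ρ, L( log( (1−p)·ρ + (p/2)·1 ) ) ≤ (1−p) · L( log ρ ), where log is the spectral functional-calculus logarithm. Equivalently, the qubit depolarizing channel Φ_{p,2}(ρ) = (1−p)ρ + (p/2)·tr(ρ)·1 satisfies L(log Φ_{p,2}(ρ)) ≤ (1−p)·L(log ρ) for every full-rank qubit state ρ. The underlying scalar fact is: for all x ∈ (−1/2, 1/2), |log(1+2(1−p)x) − log(1−2(1−p)x)| ≤ (1−p)·|log(1+2x) − log(1−2x)|. -/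
/-
A full-rank qubit state `ρ` has eigenvalues `1/2 ± x` with `|x| < 1/2`, and the depolarized
state `σ = (1 - p) ρ + (p/2) 1` has the same eigenvectors and eigenvalues `1/2 ± (1 - p) x`.
Every function of `ρ` is `c • 1 + (f λ₀ - f λ₁) • P` for one fixed matrix `P`, and `L` does not
see the scalar part, so `L (log σ) = |logRatio ((1 - p) x)| L P` and `L (log ρ) = |logRatio x| L P`
with `logRatio x = log (1 + 2x) - log (1 - 2x)`. This function is odd, vanishes at `0` and is
convex on `[0, 1/2)`, hence `logRatio (t x) ≤ t logRatio x` there for `t ∈ [0, 1]`.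
-/

open scoped ENNReal NNReal ComplexOrder Matrix Matrix.Norms.L2Operator

noncomputable section

open Real Set

def logRatio (y : ℝ) : ℝ := log (1 + 2 * y) - log (1 - 2 * y)

theorem logRatio_neg (y : ℝ) : logRatio (-y) = -logRatio y := by
  rw [logRatio, logRatio, mul_neg, ← sub_eq_add_neg, sub_neg_eq_add, neg_sub]

theorem logRatio_zero : logRatio 0 = 0 := by
  simp [logRatio]

theorem log_sub_log_eq_logRatio {a b : ℝ} (ha : 0 < a) (hb : 0 < b) (hab : a + b = 1) :
    log a - log b = logRatio (a - 1 / 2) := by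
  have h₁ : 1 + 2 * (a - 1 / 2) = 2 * a := by ring
  have h₂ : 1 - 2 * (a - 1 / 2) = 2 * b := by linear_combination (-2) * hab
  rw [logRatio, h₁, h₂, log_mul two_ne_zero ha.ne', log_mul two_ne_zero hb.ne']
  ring

theorem hasDerivAt_logRatio {y : ℝ} (hy : y ∈ Ioo (-(1 / 2)) (1 / 2)) :
    HasDerivAt logRatio (4 / (1 - 4 * y ^ 2)) y := by
  have hplus : 1 + 2 * y ≠ 0 := by linarith [hy.1]
  have hminus : 1 - 2 * y ≠ 0 := by linarith [hy.2]
  have hlin : HasDerivAt (fun t => 2 * t) 2 y := by simpa using (hasDerivAt_id y).const_mul 2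
  refine (((hlin.const_add 1).log hplus).sub ((hlin.const_sub 1).log hminus)).congr_deriv ?_
  rw [show 1 - 4 * y ^ 2 = (1 + 2 * y) * (1 - 2 * y) by ring]
  field_simp
  ring

theorem logRatio_nonneg {y : ℝ} (hy : y ∈ Ico 0 (1 / 2)) : 0 ≤ logRatio y := by
  have := log_nonneg (show 1 ≤ 1 + 2 * y by linarith [hy.1])
  have := log_nonpos (show 0 ≤ 1 - 2 * y by linarith [hy.2]) (by linarith [hy.1])
  rw [logRatio]; linarith

theorem convexOn_logRatio : ConvexOn ℝ (Ico 0 (1 / 2)) logRatio := by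
  have hsub : Ico (0 : ℝ) (1 / 2) ⊆ Ioo (-(1 / 2)) (1 / 2) :=
    fun y hy => ⟨by linarith [hy.1], hy.2⟩
  have hderiv : ∀ y ∈ interior (Ico (0 : ℝ) (1 / 2)),
      HasDerivAt logRatio (4 / (1 - 4 * y ^ 2)) y :=
    fun y hy => hasDerivAt_logRatio (hsub (interior_subset hy))
  refine MonotoneOn.convexOn_of_deriv (convex_Ico _ _)
    (fun y hy => (hasDerivAt_logRatio (hsub hy)).continuousAt.continuousWithinAt)
    (fun y hy => (hderiv y hy).differentiableAt.differentiableWithinAt) ?_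
  intro a ha b hb hab
  rw [(hderiv a ha).deriv, (hderiv b hb).deriv]
  rw [interior_Ico] at ha hb
  exact div_le_div_of_nonneg_left (by norm_num) (by nlinarith [hb.1, hb.2])
    (by nlinarith [ha.1.le, hab])

theorem logRatio_mul_le {q y : ℝ} (hq : q ∈ Icc 0 1) (hy : y ∈ Ico 0 (1 / 2)) :
    logRatio (q * y) ≤ q * logRatio y := by
  have h0 : (0 : ℝ) ∈ Ico 0 (1 / 2) := ⟨le_rfl, by norm_num⟩
  have := convexOn_logRatio.2 hy h0 hq.1 (sub_nonneg.2 hq.2) (by ring)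
  simpa [logRatio_zero] using this

theorem abs_logRatio_mul_le {q y : ℝ} (hq : q ∈ Icc 0 1) (hy : y ∈ Ioo (-(1 / 2)) (1 / 2)) :
    |logRatio (q * y)| ≤ q * |logRatio y| := by
  wlog hy₀ : 0 ≤ y generalizing y
  · simpa only [mul_neg, logRatio_neg, abs_neg] using
      this (y := -y) ⟨by linarith [hy.2], by linarith [hy.1]⟩ (by linarith)
  have hqy : q * y ∈ Ico 0 (1 / 2) :=
    ⟨mul_nonneg hq.1 hy₀, by nlinarith [hq.1, hq.2, hy.2]⟩
  rw [abs_of_nonneg (logRatio_nonneg hqy), abs_of_nonneg (logRatio_nonneg ⟨hy₀, hy.2⟩)]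
  exact logRatio_mul_le hq ⟨hy₀, hy.2⟩

theorem Seminorm.map_add_eq_of_map_left_eq_zero {𝕜 E : Type*} [SeminormedRing 𝕜]
    [AddCommGroup E] [Module 𝕜 E] (p : Seminorm 𝕜 E) {x y : E} (hy : p y = 0) :
    p (y + x) = p x := by
  have := abs_sub_map_le_sub p (y + x) x
  rw [add_sub_cancel_right, hy, abs_nonpos_iff, sub_eq_zero] at this
  exact this

theorem Matrix.IsHermitian.exists_cfc_eq_of_fin_two {𝕜 : Type*} [RCLike 𝕜]
    {A : Matrix (Fin 2) (Fin 2) 𝕜} (hA : A.IsHermitian) :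
    ∃ P : Matrix (Fin 2) (Fin 2) 𝕜, ∀ f : ℝ → ℝ, cfc f A = (f (hA.eigenvalues 1) : 𝕜) • 1 +
      ((f (hA.eigenvalues 0) - f (hA.eigenvalues 1) : ℝ) : 𝕜) • P := by
  set U : Matrix (Fin 2) (Fin 2) 𝕜 := ↑hA.eigenvectorUnitary with hU
  refine ⟨U * Matrix.diagonal (Pi.single 0 1) * star U, fun f => ?_⟩
  have hdiag : Matrix.diagonal (RCLike.ofReal ∘ f ∘ hA.eigenvalues) =
      (f (hA.eigenvalues 1) : 𝕜) • (1 : Matrix (Fin 2) (Fin 2) 𝕜) +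
      ((f (hA.eigenvalues 0) - f (hA.eigenvalues 1) : ℝ) : 𝕜) •
        Matrix.diagonal (Pi.single 0 1) := by
    rw [← Matrix.diagonal_one, ← Matrix.diagonal_smul, ← Matrix.diagonal_smul,
      Matrix.diagonal_add]
    congr 1
    ext i
    fin_cases i <;> simp
  have hUU : U * star U = 1 := Unitary.mul_star_self_of_mem hA.eigenvectorUnitary.prop
  rw [hA.cfc_eq, Matrix.IsHermitian.cfc, Unitary.conjStarAlgAut_apply, ← hU, hdiag]
  simp only [Matrix.mul_add, Matrix.add_mul, Matrix.mul_smul, Matrix.smul_mul, Matrix.mul_one,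
    hUU]

theorem Matrix.IsHermitian.mlog_smul_add_smul_one {n : Type*} [Fintype n] [DecidableEq n]
    {A : Matrix n n ℂ} (hA : A.IsHermitian) {a b : ℝ}
    (h : ∀ i, a * hA.eigenvalues i + b ≠ 0) :
    mlog (a • A + b • 1) = cfc (fun t => log (a * t + b)) A := by
  have hcont : ContinuousOn log ((fun t => a * t + b) '' spectrum ℝ A) := by
    refine continuousOn_log.mono ?_
    rintro - ⟨t, ht, rfl⟩
    rw [hA.spectrum_real_eq_range_eigenvalues] at ht
    obtain ⟨i, rfl⟩ := ht
    exact h i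
  have haffine : cfc (fun t : ℝ => a * t + b) A = a • A + b • 1 := by
    rw [cfc_add A (fun t => a * t) (fun _ => b), cfc_const_mul a (fun t : ℝ => t) A,
      cfc_id' ℝ A, cfc_const b A, Algebra.algebraMap_eq_smul_one]
  rw [mlog, ← haffine, cfc_comp' log (fun t => a * t + b) A hcont]

theorem depolarizing_log_lipschitz_general (p : ℝ) (hp : p ∈ Set.Icc (0 : ℝ) 1)
    (L : Matrix (Fin 2) (Fin 2) ℂ → ℝ)
    (hL_add : ∀ x y, L (x + y) ≤ L x + L y)
    (hL_smul : ∀ (c : ℂ) (x), L (c • x) = ‖c‖ * L x)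
    (hL_scalar : ∀ c : ℂ, L (c • (1 : Matrix (Fin 2) (Fin 2) ℂ)) = 0) :
    (∀ ρ : Matrix (Fin 2) (Fin 2) ℂ, ρ.PosDef → ρ.trace = 1 →
      L (mlog ((1 - p) • ρ + (p / 2) • (1 : Matrix (Fin 2) (Fin 2) ℂ))) ≤
        (1 - p) * L (mlog ρ)) ∧
    (∀ x : ℝ, x ∈ Set.Ioo (-(1/2) : ℝ) (1/2) →
      |Real.log (1 + 2*(1-p)*x) - Real.log (1 - 2*(1-p)*x)| ≤
        (1 - p) * |Real.log (1 + 2*x) - Real.log (1 - 2*x)|) := by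
  obtain ⟨hp₀, hp₁⟩ := hp
  have hq : 1 - p ∈ Icc (0 : ℝ) 1 := ⟨by linarith, by linarith⟩
  refine ⟨fun ρ hρ htr => ?_,
    fun x hx => by simpa only [logRatio, mul_assoc] using abs_logRatio_mul_le hq hx⟩
  let N : Seminorm ℂ (Matrix (Fin 2) (Fin 2) ℂ) := Seminorm.of L hL_add hL_smul
  obtain ⟨P, hP⟩ := hρ.isHermitian.exists_cfc_eq_of_fin_two
  set μ := hρ.isHermitian.eigenvalues
  have hμ_pos : ∀ i, 0 < μ i := hρ.eigenvalues_pos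
  have hμ_sum : μ 0 + μ 1 = 1 := by
    have := congrArg Complex.re hρ.isHermitian.trace_eq_sum_eigenvalues
    simpa [htr, Fin.sum_univ_two] using this.symm
  have hσ_pos : ∀ i, 0 < (1 - p) * μ i + p / 2 := fun i => by
    rcases hp₀.lt_or_eq with hp₀ | rfl
    · nlinarith [hμ_pos i]
    · simpa using hμ_pos i
  have hL_cfc : ∀ f : ℝ → ℝ, L (cfc f ρ) = |f (μ 0) - f (μ 1)| * L P := fun f => by
    show N (cfc f ρ) = |f (μ 0) - f (μ 1)| * N P
    rw [hP, N.map_add_eq_of_map_left_eq_zero (hL_scalar _), map_smul_eq_mul, RCLike.norm_ofReal]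
  have hx : μ 0 - 1 / 2 ∈ Ioo (-(1 / 2)) (1 / 2) :=
    ⟨by linarith [hμ_pos 0], by linarith [hμ_pos 1]⟩
  rw [hρ.isHermitian.mlog_smul_add_smul_one (fun i => (hσ_pos i).ne'), mlog, hL_cfc, hL_cfc,
    log_sub_log_eq_logRatio (hσ_pos 0) (hσ_pos 1) (by linear_combination (1 - p) * hμ_sum),
    log_sub_log_eq_logRatio (hμ_pos 0) (hμ_pos 1) hμ_sum, ← mul_assoc]
  refine mul_le_mul_of_nonneg_right ?_ (apply_nonneg N P)
  rw [show (1 - p) * μ 0 + p / 2 - 1 / 2 = (1 - p) * (μ 0 - 1 / 2) by ring]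
  exact abs_logRatio_mul_le hq hx

/-- For the qubit depolarizing channel and any seminorm `L` on `M_2`
vanishing on scalar multiples of the identity:
`L(log((1−p)ρ + (p/2)·1)) ≤ (1−p)·L(log ρ)` for every positive definite qubit density
matrix `ρ`, together with the underlying scalar inequality. -/
theorem depolarizing_log_lipschitz (p : ℝ) (hp : p ∈ Set.Icc (0 : ℝ) 1)
    (L : Matrix (Fin 2) (Fin 2) ℂ → ℝ)
    (hL_nonneg : ∀ x, 0 ≤ L x)
    (hL_add : ∀ x y, L (x + y) ≤ L x + L y)
    (hL_smul : ∀ (c : ℂ) (x), L (c • x) = ‖c‖ * L x)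
    (hL_scalar : ∀ c : ℂ, L (c • (1 : Matrix (Fin 2) (Fin 2) ℂ)) = 0) :
    (∀ ρ : Matrix (Fin 2) (Fin 2) ℂ, ρ.PosDef → ρ.trace = 1 →
      L (mlog ((1 - p) • ρ + (p / 2) • (1 : Matrix (Fin 2) (Fin 2) ℂ))) ≤
        (1 - p) * L (mlog ρ)) ∧
    (∀ x : ℝ, x ∈ Set.Ioo (-(1/2) : ℝ) (1/2) →
      |Real.log (1 + 2*(1-p)*x) - Real.log (1 - 2*(1-p)*x)| ≤
        (1 - p) * |Real.log (1 + 2*x) - Real.log (1 - 2*x)|) :=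
  depolarizing_log_lipschitz_general p hp L hL_add hL_smul hL_scalar

end
end

section
/- For every p ∈ [0,1] and every 2×2 density matrix ρ, D( (1−p)·ρ + (p/2)·1 ∥ (1/2)·1 ) ≤ (1−p)² · D( ρ ∥ (1/2)·1 ). That is, the entropy contraction coefficient of the qubit depolarizing channel Φ_{p,2}(ρ) = (1−p)ρ + (p/2)·tr(ρ)·1 with respect to its fixed point, the maximally mixed state (1/2)·1, satisfies η^D(Φ_{p,2}, 1/2) ≤ (1−p)². -/
open scoped ENNReal NNReal ComplexOrder Matrix Matrix.Norms.L2Operator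

noncomputable section

/-! The eigenvalues of `ρ` are `(1 ± t)/2` with `|t| ≤ 1` and the channel maps them to
`(1 ± q t)/2`, `q = 1 - p`, so both relative entropies are values of the divergence `F` of a
coin from the fair coin (`klFairCoin`), and the claim becomes `F (q t) ≤ q² F t`. Here
`F' = (log (1 + t) - log (1 - t)) / 2 =: L / 2`, so it suffices that `L (q t) ≤ q L t`, which
holds because `L 0 = 0` and `L' = 2 / (1 - t²)` increases on `[0, 1)`. Both steps are instances
of one comparison: if `f 0 = 0` and `f' (q x) ≤ qⁿ f' x`, then `f (q x) ≤ qⁿ⁺¹ f x`. -/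

open Real Set

theorem map_mul_le_pow_mul_of_hasDerivAt {f f' : ℝ → ℝ} {a q : ℝ} (n : ℕ)
    (hq₀ : 0 ≤ q) (hq₁ : q ≤ 1) (hf₀ : f 0 = 0) (hf : ContinuousOn f (Icc 0 a))
    (hf' : ∀ x ∈ Ico 0 a, HasDerivAt f (f' x) x)
    (hf'q : ∀ x ∈ Ioo 0 a, f' (q * x) ≤ q ^ n * f' x) {x : ℝ} (hx : x ∈ Icc 0 a) :
    f (q * x) ≤ q ^ (n + 1) * f x := by
  have hmaps : MapsTo (q * ·) (Icc 0 a) (Icc 0 a) := fun y hy ↦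
    ⟨mul_nonneg hq₀ hy.1, by nlinarith [hy.1, hy.2]⟩
  have hmono : MonotoneOn (fun y ↦ q ^ (n + 1) * f y - f (q * y)) (Icc 0 a) := by
    refine monotoneOn_of_hasDerivWithinAt_nonneg (f' := fun y ↦ q * (q ^ n * f' y - f' (q * y)))
      (convex_Icc 0 a)
      ((continuousOn_const.mul hf).sub (hf.comp (continuousOn_const.mul continuousOn_id) hmaps))
      (fun y hy ↦ ?_) (fun y hy ↦ ?_)
    · rw [interior_Icc] at hy
      have hqy : q * y ∈ Ico 0 a := ⟨mul_nonneg hq₀ hy.1.le, by nlinarith [hy.1, hy.2]⟩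
      have hcomp := (hf' (q * y) hqy).comp y ((hasDerivAt_id y).const_mul q)
      exact ((((hf' y (Ioo_subset_Ico_self hy)).const_mul (q ^ (n + 1))).sub hcomp).congr_deriv
        (by ring)).hasDerivWithinAt
    · rw [interior_Icc] at hy
      exact mul_nonneg hq₀ (sub_nonneg.2 (hf'q y hy))
  simpa [hf₀] using hmono ⟨le_rfl, hx.1.trans hx.2⟩ hx hx.1

/-- The relative entropy of the coin `((1 + t) / 2, (1 - t) / 2)` with respect to the fair coin. -/
def klFairCoin (t : ℝ) : ℝ := ((1 + t) * log (1 + t) + (1 - t) * log (1 - t)) / 2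

lemma klFairCoin_zero : klFairCoin 0 = 0 := by simp [klFairCoin]

lemma klFairCoin_neg (t : ℝ) : klFairCoin (-t) = klFairCoin t := by
  unfold klFairCoin; ring_nf

lemma continuous_klFairCoin : Continuous klFairCoin := by
  have := continuous_mul_log
  unfold klFairCoin
  fun_prop

lemma hasDerivAt_klFairCoin {t : ℝ} (ht : t ∈ Ioo (-1) 1) :
    HasDerivAt klFairCoin ((log (1 + t) - log (1 - t)) / 2) t := by
  have hplus := (hasDerivAt_mul_log (x := 1 + t) (by linarith [ht.1])).comp t
    ((hasDerivAt_id t).const_add 1)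
  have hminus := (hasDerivAt_mul_log (x := 1 - t) (by linarith [ht.2])).comp t
    ((hasDerivAt_id t).const_sub 1)
  exact ((hplus.add hminus).div_const 2).congr_deriv (by ring)

lemma klFairCoin_sub_sub {a b : ℝ} (hab : a + b = 1) :
    a * log a + b * log b + log 2 = klFairCoin (a - b) := by
  have hmul (x : ℝ) : x * log (2 * x) = x * log x + x * log 2 := by
    rcases eq_or_ne x 0 with rfl | hx
    · simp
    · rw [log_mul two_ne_zero hx]; ring
  rw [klFairCoin, show 1 + (a - b) = 2 * a by linarith, show 1 - (a - b) = 2 * b by linarith,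
    mul_assoc, mul_assoc, hmul, hmul]
  linear_combination (-log 2) * hab

lemma log_one_add_sub_log_one_sub_mul_le {q x : ℝ} (hq₀ : 0 ≤ q) (hq₁ : q ≤ 1)
    (hx₀ : 0 ≤ x) (hx₁ : x < 1) :
    log (1 + q * x) - log (1 - q * x) ≤ q * (log (1 + x) - log (1 - x)) := by
  have hderiv {s : ℝ} (hs : s ∈ Ioo (-1) 1) :
      HasDerivAt (fun s ↦ log (1 + s) - log (1 - s)) ((1 + s)⁻¹ + (1 - s)⁻¹) s := by
    have hplus := ((hasDerivAt_id' s).const_add 1).log (by linarith [hs.1])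
    have hminus := ((hasDerivAt_id' s).const_sub 1).log (by linarith [hs.2])
    exact (hplus.sub hminus).congr_deriv (by ring)
  have hmono {s u : ℝ} (hs : 0 ≤ s) (hsu : s ≤ u) (hu : u < 1) :
      (1 + s)⁻¹ + (1 - s)⁻¹ ≤ (1 + u)⁻¹ + (1 - u)⁻¹ := by
    rw [inv_add_inv (by linarith) (by linarith), inv_add_inv (by linarith) (by linarith)]
    ring_nf
    gcongr; nlinarith
  have hdomain {s : ℝ} (hs : s ∈ Icc 0 x) : s ∈ Ioo (-1) 1 :=
    ⟨by linarith [hs.1], by linarith [hs.2]⟩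
  simpa using map_mul_le_pow_mul_of_hasDerivAt 0 hq₀ hq₁ (by simp)
    (fun s hs ↦ (hderiv (hdomain hs)).continuousAt.continuousWithinAt)
    (fun s hs ↦ hderiv (hdomain (Ico_subset_Icc_self hs)))
    (fun s hs ↦ by
      simpa using hmono (mul_nonneg hq₀ hs.1.le) (by nlinarith [hs.1]) (by linarith [hs.2]))
    ⟨hx₀, le_rfl⟩

lemma klFairCoin_mul_le {q t : ℝ} (hq₀ : 0 ≤ q) (hq₁ : q ≤ 1) (ht : |t| ≤ 1) :
    klFairCoin (q * t) ≤ q ^ 2 * klFairCoin t := by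
  wlog ht₀ : 0 ≤ t generalizing t
  · simpa [klFairCoin_neg] using this (t := -t) (by rwa [abs_neg]) (by linarith)
  exact map_mul_le_pow_mul_of_hasDerivAt 1 hq₀ hq₁ klFairCoin_zero
    continuous_klFairCoin.continuousOn
    (fun x hx ↦ hasDerivAt_klFairCoin ⟨by linarith [hx.1], hx.2⟩)
    (fun x hx ↦ by
      have := log_one_add_sub_log_one_sub_mul_le hq₀ hq₁ hx.1.le hx.2
      rw [pow_one]; linarith)
    ⟨ht₀, (le_abs_self t).trans ht⟩

namespace Matrix

variable {ι : Type*} [Fintype ι] [DecidableEq ι]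

lemma IsHermitian.trace_cfc {A : Matrix ι ι ℂ} (hA : A.IsHermitian) (f : ℝ → ℝ) :
    (cfc f A).trace = ∑ i, (f (hA.eigenvalues i) : ℂ) := by
  rw [hA.cfc_eq, IsHermitian.cfc, Unitary.conjStarAlgAut_apply, trace_mul_cycle,
    Unitary.coe_star_mul_self, one_mul, trace_diagonal]
  simp

lemma IsHermitian.traceEnt_cfc {A : Matrix ι ι ℂ} (hA : A.IsHermitian) (f : ℝ → ℝ) :
    traceEnt (cfc f A) =
      ∑ i, f (hA.eigenvalues i) * log (f (hA.eigenvalues i)) := by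
  rw [traceEnt, ← cfc_comp' (hf := A.finite_real_spectrum.continuousOn _)
    (hg := (A.finite_real_spectrum.image f).continuousOn _), hA.trace_cfc]
  simp

lemma mlog_smul_one (c : ℝ) : mlog (c • (1 : Matrix ι ι ℂ)) = log c • 1 := by
  rw [mlog, ← Algebra.algebraMap_eq_smul_one, cfc_algebraMap, Algebra.algebraMap_eq_smul_one]

lemma relEnt_smul_one (ρ : Matrix ι ι ℂ) (c : ℝ) :
    relEnt ρ (c • 1) = traceEnt ρ - ρ.trace.re * log c := by
  rw [relEnt, mlog_smul_one, Matrix.mul_smul, mul_one, trace_smul, Complex.real_smul,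
    Complex.re_ofReal_mul, mul_comm]

lemma IsHermitian.relEnt_cfc_half_smul_one {A : Matrix (Fin 2) (Fin 2) ℂ}
    (hA : A.IsHermitian) {f : ℝ → ℝ} (hf : f (hA.eigenvalues 0) + f (hA.eigenvalues 1) = 1) :
    relEnt (cfc f A) ((1 / 2 : ℝ) • 1) =
      klFairCoin (f (hA.eigenvalues 0) - f (hA.eigenvalues 1)) := by
  rw [relEnt_smul_one, hA.traceEnt_cfc, hA.trace_cfc, Fin.sum_univ_two, Fin.sum_univ_two,
    ← klFairCoin_sub_sub hf, one_div, log_inv]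
  norm_cast
  rw [hf]
  ring

end Matrix

/-- Entropy contraction for the qubit depolarizing channel
`Φ_{p,2}(ρ) = (1−p)ρ + (p/2)·1`: for every `p ∈ [0,1]` and every qubit density matrix
`ρ`, `D(Φ_{p,2}(ρ) ‖ 1/2) ≤ (1−p)²·D(ρ ‖ 1/2)`; i.e. `η^D(Φ_{p,2}, 1/2) ≤ (1−p)²`. -/
theorem depolarizing_entropy_contraction (p : ℝ) (hp : p ∈ Set.Icc (0 : ℝ) 1)
    (ρ : Matrix (Fin 2) (Fin 2) ℂ) (hρ : ρ.PosSemidef) (hρtr : ρ.trace = 1) :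
    relEnt ((1 - p) • ρ + (p / 2) • (1 : Matrix (Fin 2) (Fin 2) ℂ))
        ((1/2 : ℝ) • (1 : Matrix (Fin 2) (Fin 2) ℂ)) ≤
      (1 - p) ^ 2 * relEnt ρ ((1/2 : ℝ) • (1 : Matrix (Fin 2) (Fin 2) ℂ)) := by
  obtain ⟨hp₀, hp₁⟩ := hp
  have hρsa : IsSelfAdjoint ρ := hρ.1
  set μ := hρ.1.eigenvalues
  have hsum : μ 0 + μ 1 = 1 := by
    simpa [hρtr, Fin.sum_univ_two] using (congrArg Complex.re hρ.1.trace_eq_sum_eigenvalues).symm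
  have hchannel : (1 - p) • ρ + (p / 2) • 1 = cfc (fun x ↦ (1 - p) * x + p / 2) ρ := by
    rw [cfc_add .., cfc_const_mul_id .., cfc_const .., Algebra.algebraMap_eq_smul_one]
  rw [hchannel, hρ.1.relEnt_cfc_half_smul_one (by linear_combination (1 - p) * hsum)]
  conv_rhs => rw [← cfc_id' ℝ ρ, hρ.1.relEnt_cfc_half_smul_one hsum]
  convert klFairCoin_mul_le (q := 1 - p) (t := μ 0 - μ 1) (by linarith) (by linarith)
    (abs_le.2 ⟨by linarith [hρ.eigenvalues_nonneg 0], by linarith [hρ.eigenvalues_nonneg 1]⟩)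
    using 2
  ring

end
end
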